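/- arXiv:1304.1902 — 5 statements merged into one kernel-verified Lean document; each statement's English description precedes it below -/
import Mathlib

section
/- If two receive transitions are enabled from the same configuration of a communicating system and they act on different channels (different sender-receiver pairs with distinct receivers), then they satisfy the one-step diamond property: firing them in either order leads to the same configuration. -/
/-- Actions of communicating finite state machines:
`send p q a` is the sending of message `a` from `p` to `q` (action `pq!a`),
`recv p q a` is the reception of `a` from `p` by `q` (action `pq?a`). -/
inductive Act (P A : Type) : Type
  | send (p q : P) (a : A)
  | recv (p q : P) (a : A)

namespace Act
variable {P A : Type}

/-- The subject (principal in charge) of an action. -/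
def subj : Act P A → P
  | send p _ _ => p
  | recv _ q _ => q

/-- The partner of an action. -/
def partner : Act P A → P
  | send _ q _ => q
  | recv p _ _ => p

def isSend : Act P A → Bool
  | send _ _ _ => true
  | recv _ _ _ => false

/-- The duality isomorphism Φ exchanging sends and receives. -/
def dual : Act P A → Act P A
  | send p q a => recv p q a
  | recv p q a => send p q a

end Act

/-- A communicating system: for each participant a CFSM given by its
transition relation and initial state (all machines share the state space `Q`
and alphabet `A`; channels are ordered pairs of participants). -/
structure Sys (P Q A : Type) where
  delta : P → Q → Act P A → Q → Prop
  init : P → Q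

/-- A configuration: a local state for each machine and a FIFO buffer word
for each channel. -/
structure Config (P Q A : Type) where
  st : P → Q
  buf : P × P → List A

variable {P Q A : Type}

/-- One firing of a transition: a send appends to the corresponding buffer,
a receive consumes the head of the corresponding buffer; only the acting
machine changes its local state. -/
inductive Step [DecidableEq P] (S : Sys P Q A) :
    Config P Q A → Act P A → Config P Q A → Prop
  | send {c : Config P Q A} {p q : P} {a : A} {q' : Q} :
      S.delta p (c.st p) (.send p q a) q' →
      Step S c (.send p q a)
        ⟨Function.update c.st p q',
         Function.update c.buf (p, q) (c.buf (p, q) ++ [a])⟩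
  | recv {c : Config P Q A} {p q : P} {a : A} {q' : Q} {w : List A} :
      S.delta q (c.st q) (.recv p q a) q' →
      c.buf (p, q) = a :: w →
      Step S c (.recv p q a)
        ⟨Function.update c.st q q', Function.update c.buf (p, q) w⟩

/-- Multi-step execution labelled by the sequence of fired actions. -/
inductive Steps [DecidableEq P] (S : Sys P Q A) :
    Config P Q A → List (Act P A) → Config P Q A → Prop
  | nil {c} : Steps S c [] c
  | cons {c c' c'' ℓ ℓs} : Step S c ℓ c' → Steps S c' ℓs c'' →
      Steps S c (ℓ :: ℓs) c''

/-- The initial configuration: initial states and empty buffers. -/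
def initConfig (S : Sys P Q A) : Config P Q A := ⟨S.init, fun _ => []⟩

def Reach [DecidableEq P] (S : Sys P Q A) (c : Config P Q A) : Prop :=
  ∃ φ, Steps S (initConfig S) φ c

/-- A configuration is stable when all buffers are empty. -/
def Stable (c : Config P Q A) : Prop := ∀ ch, c.buf ch = []

/-- Machine `p` only performs actions whose subject is `p`. -/
def Proper (S : Sys P Q A) : Prop :=
  ∀ p q ℓ q', S.delta p q ℓ q' → Act.subj ℓ = p

def Deterministic (S : Sys P Q A) : Prop :=
  ∀ p q ℓ q1 q2, S.delta p q ℓ q1 → S.delta p q ℓ q2 → q1 = q2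

/-- Every state is directed: all its outgoing actions involve the same partner. -/
def DirectedSys (S : Sys P Q A) : Prop :=
  ∀ p q ℓ1 q1 ℓ2 q2, S.delta p q ℓ1 q1 → S.delta p q ℓ2 q2 →
    Act.partner ℓ1 = Act.partner ℓ2

/-- No mixed states: no state has both sending and receiving outgoing actions. -/
def NoMixed (S : Sys P Q A) : Prop :=
  ∀ p q ℓ1 q1 ℓ2 q2, S.delta p q ℓ1 q1 → S.delta p q ℓ2 q2 →
    Act.isSend ℓ1 = Act.isSend ℓ2

/-- A system of basic CFSMs: deterministic, directed, no mixed states. -/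
def Basic (S : Sys P Q A) : Prop :=
  Proper S ∧ Deterministic S ∧ DirectedSys S ∧ NoMixed S

/-- 1-bounded reachability: reachable by executions in which no intermediate
buffer ever contains more than one message. -/
inductive Reach1 [DecidableEq P] (S : Sys P Q A) : Config P Q A → Prop
  | init : Reach1 S (initConfig S)
  | step {c ℓ c'} : Reach1 S c → Step S c ℓ c' →
      (∀ ch, (c'.buf ch).length ≤ 1) → Reach1 S c'

/-- Sequences of actions executable from a local state of machine `p`. -/
inductive LocalTr (S : Sys P Q A) (p : P) : Q → List (Act P A) → Prop
  | nil {q} : LocalTr S p q []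
  | cons {q q' ℓ ℓs} : S.delta p q ℓ q' → LocalTr S p q' ℓs →
      LocalTr S p q (ℓ :: ℓs)

/-- A transition of the associated CFSM of the subsystem without machine `i`:
a local transition of some machine other than `i` (product automaton,
no buffer constraints). -/
def PStep [DecidableEq P] (S : Sys P Q A) (i : P)
    (st : P → Q) (ℓ : Act P A) (st' : P → Q) : Prop :=
  ∃ p q', p ≠ i ∧ Act.subj ℓ = p ∧ S.delta p (st p) ℓ q' ∧
    st' = Function.update st p q'

/-- `Match S i st ℓs` : the subsystem without `i` can, from control state `st`,
produce the dual of every action of `ℓs` in order, interleaved with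
alternations (internal synchronisations) not involving machine `i`. -/
inductive Match [DecidableEq P] (S : Sys P Q A) (i : P) :
    (P → Q) → List (Act P A) → Prop
  | nil {st} : Match S i st []
  | alt {st st1 st2 p q a ℓs} : p ≠ i → q ≠ i →
      PStep S i st (.send p q a) st1 →
      PStep S i st1 (.recv p q a) st2 →
      Match S i st2 ℓs → Match S i st ℓs
  | dual {st st' ℓ ℓs} : PStep S i st (Act.dual ℓ) st' →
      Match S i st' ℓs → Match S i st (ℓ :: ℓs)

/-- Multiparty compatibility: from any 1-bounded reachable stable
configuration, any sequence of actions of any machine `i` is matched by dual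
actions of the rest of the system, up to alternations not involving `i`. -/
def MultipartyCompatible [DecidableEq P] (S : Sys P Q A) : Prop :=
  ∀ c, Reach1 S c → Stable c →
    ∀ i ℓs, LocalTr S i (c.st i) ℓs → Match S i c.st ℓs

/-- two enabled receive transitions on different channels
(different sender-receiver pairs, distinct receivers) satisfy the one-step
diamond property. -/
theorem recv_recv_diamond [DecidableEq P] (S : Sys P Q A)
    (c c1 c2 : Config P Q A) (p1 q1 p2 q2 : P) (a1 a2 : A)
    (hq : q1 ≠ q2) (hch : (p1, q1) ≠ (p2, q2))
    (h1 : Step S c (.recv p1 q1 a1) c1)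
    (h2 : Step S c (.recv p2 q2 a2) c2) :
    ∃ c', Step S c1 (.recv p2 q2 a2) c' ∧ Step S c2 (.recv p1 q1 a1) c' := by
  cases h1 with
  | recv d1 hb1 =>
    cases h2 with
    | recv d2 hb2 =>
      rename_i st1 w1 st2 w2
      refine ⟨⟨Function.update (Function.update c.st q1 st1) q2 st2,
        Function.update (Function.update c.buf (p1, q1) w1) (p2, q2) w2⟩, ?_, ?_⟩
      · have := Step.recv (S := S)
          (c := ⟨Function.update c.st q1 st1, Function.update c.buf (p1, q1) w1⟩)
          (p := p2) (q := q2) (a := a2) (q' := st2) (w := w2)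
          (by simpa [Function.update_of_ne hq.symm] using d2)
          (by simpa [Function.update_of_ne (Ne.symm hch)] using hb2)
        simpa using this
      · have := Step.recv (S := S)
          (c := ⟨Function.update c.st q2 st2, Function.update c.buf (p2, q2) w2⟩)
          (p := p1) (q := q1) (a := a1) (q' := st1) (w := w1)
          (by simpa [Function.update_of_ne hq] using d1)
          (by simpa [Function.update_of_ne hch] using hb1)
        have e1 : Function.update (Function.update c.st q2 st2) q1 st1 =
            Function.update (Function.update c.st q1 st1) q2 st2 :=
          Function.update_comm hq.symm _ _ _
        have e2 : Function.update (Function.update c.buf (p2, q2) w2) (p1, q1) w1 =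
            Function.update (Function.update c.buf (p1, q1) w1) (p2, q2) w2 :=
          (Function.update_comm hch _ _ _).symm
        simpa [e1, e2] using this
end

section
/- If from a configuration s of a communicating system a receive transition t1 (on channel p1q1 by receiver q1) and a send transition t2 (on channel p2q2 by sender p2) are both enabled and their subjects are distinct (q1 ≠ p2), then they commute: there is a common configuration reachable by firing them in either order. -/
variable {P Q A : Type}

/-- an enabled receive transition (by receiver q1 on channel
p1q1) and an enabled send transition (by sender p2 on channel p2q2) with
distinct subjects commute. -/
theorem recv_send_commute [DecidableEq P] (S : Sys P Q A)
    (c c1 c2 : Config P Q A) (p1 q1 p2 q2 : P) (a1 a2 : A)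
    (hsubj : q1 ≠ p2)
    (h1 : Step S c (.recv p1 q1 a1) c1)
    (h2 : Step S c (.send p2 q2 a2) c2) :
    ∃ c', Step S c1 (.send p2 q2 a2) c' ∧ Step S c2 (.recv p1 q1 a1) c' := by
  cases h1 with
  | recv hd1 hw =>
    rename_i r1 w
    cases h2 with
    | send hd2 =>
      rename_i r2
      set c1 : Config P Q A :=
        ⟨Function.update c.st q1 r1, Function.update c.buf (p1, q1) w⟩ with hc1
      set c2 : Config P Q A :=
        ⟨Function.update c.st p2 r2,
         Function.update c.buf (p2, q2) (c.buf (p2, q2) ++ [a2])⟩ with hc2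
      have hst1 : c1.st p2 = c.st p2 := Function.update_of_ne (Ne.symm hsubj) _ _
      have hst2 : c2.st q1 = c.st q1 := Function.update_of_ne hsubj _ _
      by_cases hch : (p1, q1) = (p2, q2)
      · -- same channel
        have hb1 : c1.buf (p2, q2) = w := by rw [← hch]; simp [hc1]
        have hb2 : c2.buf (p1, q1) = a1 :: (w ++ [a2]) := by
          rw [hch]; simp [hc2, ← hch, hw]
        refine ⟨_, Step.send (show S.delta p2 (c1.st p2) _ _ by rw [hst1]; exact hd2), ?_⟩
        · have := Step.recv (S := S) (c := c2) (w := w ++ [a2])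
            (by rw [hst2]; exact hd1) hb2
          convert this using 2
          · funext x
            by_cases hx : x = q1
            · subst hx; simp [hc1, hc2, Function.update_of_ne hsubj]
            · by_cases hx2 : x = p2
              · subst hx2
                simp [hc1, hc2, Function.update_of_ne hx]
              · simp [hc1, hc2, Function.update_of_ne hx, Function.update_of_ne hx2]
          · funext ch
            by_cases hc' : ch = (p1, q1)
            · subst hc'
              simp only [hc1, hc2]
              rw [hch]
              simp [← hch]
            · simp [hc1, hc2, Function.update_of_ne hc', Function.update_of_ne (hch ▸ hc')]
      · -- different channels
        have hb1 : c1.buf (p2, q2) = c.buf (p2, q2) := by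
          simp [hc1, Function.update_of_ne (Ne.symm hch)]
        have hb2 : c2.buf (p1, q1) = a1 :: w := by
          simp [hc2, Function.update_of_ne hch, hw]
        refine ⟨_, Step.send (show S.delta p2 (c1.st p2) _ _ by rw [hst1]; exact hd2), ?_⟩
        · have := Step.recv (S := S) (c := c2) (w := w)
            (by rw [hst2]; exact hd1) hb2
          convert this using 2
          · funext x
            by_cases hx : x = q1
            · subst hx; simp [hc1, hc2, Function.update_of_ne hsubj]
            · by_cases hx2 : x = p2
              · subst hx2
                simp [hc1, hc2, Function.update_of_ne hx]
              · simp [hc1, hc2, Function.update_of_ne hx, Function.update_of_ne hx2]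
          · funext ch
            by_cases hc' : ch = (p1, q1)
            · subst hc'
              simp [hc1, hc2, Function.update_of_ne hch]
            · by_cases hc2' : ch = (p2, q2)
              · subst hc2'
                simp [hc1, hc2, Function.update_of_ne (Ne.symm hch),
                  Function.update_of_ne hc']
              · simp [hc1, hc2, Function.update_of_ne hc', Function.update_of_ne hc2']
end

section
/- If a system of basic CFSMs is multiparty compatible, then it is deadlock-free: no reachable configuration is a stable non-final configuration in which every machine is in a receiving state. -/
variable {P Q A : Type}

/-- A deadlock configuration: stable, non-final (some machine still has an
outgoing transition), and every machine is in a receiving state. -/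
def Deadlock (S : Sys P Q A) (c : Config P Q A) : Prop :=
  Stable c ∧ (∃ p ℓ q', S.delta p (c.st p) ℓ q') ∧
    (∀ p ℓ q', S.delta p (c.st p) ℓ q' → Act.isSend ℓ = false)

section Executions

variable {S : Sys P Q A} {c c₁ c₂ d e m : Config P Q A} {p q : P} {a b : A}
  {ℓ : Act P A} {ψ β γ : List (Act P A)}

def Idle (p : P) (ψ : List (Act P A)) : Prop := ∀ ℓ ∈ ψ, ℓ.subj ≠ p

theorem idle_append : Idle p (β ++ γ) ↔ Idle p β ∧ Idle p γ :=
  List.forall_mem_append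

theorem idle_cons : Idle p (ℓ :: ψ) ↔ ℓ.subj ≠ p ∧ Idle p ψ :=
  List.forall_mem_cons

theorem exists_first_of_not_idle (h : ¬ Idle p ψ) :
    ∃ β ℓ γ, ψ = β ++ ℓ :: γ ∧ Idle p β ∧ ℓ.subj = p := by
  induction ψ with
  | nil => exact (h fun _ => by simp).elim
  | cons ℓ ψ ih =>
    by_cases hℓ : ℓ.subj = p
    · exact ⟨[], ℓ, ψ, rfl, fun _ => by simp, hℓ⟩
    · obtain ⟨β, ℓ', γ, rfl, hβ, hℓ'⟩ := ih fun hψ => h (idle_cons.2 ⟨hℓ, hψ⟩)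
      exact ⟨ℓ :: β, ℓ', γ, rfl, idle_cons.2 ⟨hℓ, hβ⟩, hℓ'⟩

theorem eq_send_of_delta (hP : Proper S) (hD : DirectedSys S) (hN : NoMixed S) {s t t' : Q}
    (hs : S.delta p s (.send p q a) t) (h : S.delta p s ℓ t') : ∃ a', ℓ = .send p q a' := by
  cases ℓ with
  | send u v b =>
    obtain rfl : u = p := hP _ _ _ _ h
    obtain rfl : v = q := hD _ _ _ _ _ _ h hs
    exact ⟨b, rfl⟩
  | recv => simpa [Act.isSend] using hN _ _ _ _ _ _ h hs

theorem eq_recv_of_delta (hP : Proper S) (hD : DirectedSys S) (hN : NoMixed S) {s t t' : Q}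
    (hr : S.delta q s (.recv p q a) t) (h : S.delta q s ℓ t') : ∃ a', ℓ = .recv p q a' := by
  cases ℓ with
  | send => simpa [Act.isSend] using hN _ _ _ _ _ _ h hr
  | recv u v b =>
    obtain rfl : v = q := hP _ _ _ _ h
    obtain rfl : u = p := hD _ _ _ _ _ _ h hr
    exact ⟨b, rfl⟩

variable [DecidableEq P]

theorem Steps.append (h₁ : Steps S c β m) (h₂ : Steps S m γ e) : Steps S c (β ++ γ) e := by
  induction h₁ with
  | nil => exact h₂
  | cons hs _ ih => exact .cons hs (ih h₂)

theorem steps_cons_iff : Steps S c (ℓ :: ψ) e ↔ ∃ m, Step S c ℓ m ∧ Steps S m ψ e :=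
  ⟨fun | .cons hs h => ⟨_, hs, h⟩, fun ⟨_, hs, h⟩ => .cons hs h⟩

theorem steps_append_iff : Steps S c (β ++ γ) e ↔ ∃ m, Steps S c β m ∧ Steps S m γ e := by
  refine ⟨fun h => ?_, fun ⟨_, h₁, h₂⟩ => h₁.append h₂⟩
  induction β generalizing c with
  | nil => exact ⟨c, .nil, h⟩
  | cons ℓ β ih =>
    obtain ⟨c₁, hs, h⟩ := steps_cons_iff.1 h
    obtain ⟨m, h₁, h₂⟩ := ih h
    exact ⟨m, .cons hs h₁, h₂⟩

theorem Step.delta (h : Step S c ℓ c₁) : ∃ t, S.delta ℓ.subj (c.st ℓ.subj) ℓ t := by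
  cases h with
  | send hd => exact ⟨_, hd⟩
  | recv hd _ => exact ⟨_, hd⟩

theorem Step.st_of_ne (h : Step S c ℓ c₁) (hp : ℓ.subj ≠ p) : c₁.st p = c.st p := by
  cases h <;> exact Function.update_of_ne (Ne.symm hp) _ _

theorem Step.buf_prefix (h : Step S c ℓ c₁) (hq : ℓ.subj ≠ q) :
    c.buf (p, q) <+: c₁.buf (p, q) := by
  cases h with
  | @send u v _ _ _ =>
    by_cases hch : (p, q) = (u, v)
    · rw [hch]; simp
    · simp [Function.update_of_ne hch]
  | @recv u v _ _ _ _ _ =>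
    have hch : (p, q) ≠ (u, v) := by simp_all [Act.subj, eq_comm]
    simp [Function.update_of_ne hch]

theorem Step.buf_suffix (h : Step S c ℓ c₁) (hp : ℓ.subj ≠ p) :
    c₁.buf (p, q) <:+ c.buf (p, q) := by
  cases h with
  | @send u v _ _ _ =>
    have hch : (p, q) ≠ (u, v) := by simp_all [Act.subj, eq_comm]
    simp [Function.update_of_ne hch]
  | @recv u v _ _ w _ hb =>
    by_cases hch : (p, q) = (u, v)
    · rw [hch, hb]; simp [List.suffix_cons]
    · simp [Function.update_of_ne hch]

theorem Steps.st_of_idle (h : Steps S c ψ e) (hp : Idle p ψ) : e.st p = c.st p := by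
  induction h with
  | nil => rfl
  | cons hs _ ih =>
    rw [idle_cons] at hp
    rw [ih hp.2, hs.st_of_ne hp.1]

theorem Steps.buf_prefix_of_idle (h : Steps S c ψ e) (hq : Idle q ψ) :
    c.buf (p, q) <+: e.buf (p, q) := by
  induction h with
  | nil => exact List.prefix_refl _
  | cons hs _ ih =>
    rw [idle_cons] at hq
    exact (hs.buf_prefix hq.1).trans (ih hq.2)

theorem Steps.buf_suffix_of_idle (h : Steps S c ψ e) (hp : Idle p ψ) :
    e.buf (p, q) <:+ c.buf (p, q) := by
  induction h with
  | nil => exact List.suffix_refl _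
  | cons hs _ ih =>
    rw [idle_cons] at hp
    exact (ih hp.2).trans (hs.buf_suffix hp.1)

theorem Steps.exists_first_action (h : Steps S c ψ e) (hp : ¬ Idle p ψ) :
    ∃ β ℓ γ t, ψ = β ++ ℓ :: γ ∧ Idle p β ∧ S.delta p (c.st p) ℓ t := by
  obtain ⟨β, ℓ, γ, rfl, hβ, rfl⟩ := exists_first_of_not_idle hp
  obtain ⟨m, hβs, hγs⟩ := steps_append_iff.1 h
  obtain ⟨m', hs, -⟩ := steps_cons_iff.1 hγs
  obtain ⟨t, ht⟩ := hs.delta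
  exact ⟨β, ℓ, γ, t, rfl, hβ, hβs.st_of_idle hβ ▸ ht⟩

theorem Steps.not_idle_of_buf_ne_nil (h : Steps S c ψ e) (he : Stable e)
    (hc : c.buf (p, q) ≠ []) : ¬ Idle q ψ := fun hq =>
  hc (List.eq_nil_of_prefix_nil (he (p, q) ▸ h.buf_prefix_of_idle hq))

theorem Steps.not_idle_of_send_mem (h : Steps S c ψ e) (he : Stable e)
    (hs : .send p q a ∈ ψ) : ¬ Idle q ψ := by
  obtain ⟨β, γ, rfl⟩ := List.append_of_mem hs
  obtain ⟨m, -, h⟩ := steps_append_iff.1 h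
  obtain ⟨m', hs, h⟩ := steps_cons_iff.1 h
  have hbuf : m'.buf (p, q) ≠ [] := by cases hs; simp
  exact fun hq => h.not_idle_of_buf_ne_nil he hbuf (idle_cons.1 (idle_append.1 hq).2).2

theorem Steps.recv_not_mem_of_idle (h : Steps S c ψ e) (hc : c.buf (p, q) = [])
    (hp : Idle p ψ) : .recv p q a ∉ ψ := by
  intro hr
  obtain ⟨β, γ, rfl⟩ := List.append_of_mem hr
  obtain ⟨m, hβ, h⟩ := steps_append_iff.1 h
  obtain ⟨m', hs, -⟩ := steps_cons_iff.1 h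
  have hm : m.buf (p, q) = [] :=
    List.eq_nil_of_suffix_nil (hc ▸ hβ.buf_suffix_of_idle (idle_append.1 hp).1)
  cases hs with
  | recv _ hb => simp [hm] at hb

theorem Step.send_of_eq {t : Q} (hd : S.delta p (c.st p) (.send p q a) t)
    (h : c₁ = ⟨Function.update c.st p t,
      Function.update c.buf (p, q) (c.buf (p, q) ++ [a])⟩) :
    Step S c (.send p q a) c₁ :=
  h ▸ .send hd

theorem Step.recv_of_eq {t : Q} {w : List A} (hd : S.delta q (c.st q) (.recv p q a) t)
    (hb : c.buf (p, q) = a :: w)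
    (h : c₁ = ⟨Function.update c.st q t, Function.update c.buf (p, q) w⟩) :
    Step S c (.recv p q a) c₁ :=
  h ▸ .recv hd hb

theorem Step.swap_send (h₁ : Step S c ℓ c₁) (h₂ : Step S c₁ (.send p q a) c₂)
    (hp : ℓ.subj ≠ p) : ∃ c', Step S c (.send p q a) c' ∧ Step S c' ℓ c₂ := by
  cases h₂ with
  | send hs =>
    rw [h₁.st_of_ne hp] at hs
    refine ⟨_, .send hs, ?_⟩
    cases h₁ with
    | @send u v _ _ hd =>
      simp only [Act.subj] at hp
      have hch : (u, v) ≠ (p, q) := by simp [hp]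
      refine .send_of_eq (by simpa [Function.update_of_ne hp] using hd) ?_
      simp only [Function.update_of_ne hch, Function.update_of_ne hch.symm,
        Function.update_comm hp, Function.update_comm hch]
    | @recv u v _ _ w hd hb =>
      simp only [Act.subj] at hp
      by_cases hch : (u, v) = (p, q)
      · obtain ⟨rfl, rfl⟩ := Prod.ext_iff.1 hch
        refine .recv_of_eq (w := w ++ [a]) (by simpa [Function.update_of_ne hp] using hd)
          (by simp [hb]) ?_
        simp only [Function.update_self, Function.update_idem, Function.update_comm hp]
      · refine .recv_of_eq (w := w) (by simpa [Function.update_of_ne hp] using hd)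
          (by simp [Function.update_of_ne hch, hb]) ?_
        simp only [Function.update_of_ne (Ne.symm hch), Function.update_comm hp,
          Function.update_comm hch]

theorem Step.swap_recv (h₁ : Step S c ℓ c₁) (h₂ : Step S c₁ (.recv p q a) c₂)
    (hq : ℓ.subj ≠ q) (hc : c.buf (p, q) ≠ []) :
    ∃ c', Step S c (.recv p q a) c' ∧ Step S c' ℓ c₂ := by
  cases h₂ with
  | recv hr hb₂ =>
    rw [h₁.st_of_ne hq] at hr
    cases h₁ with
    | @send u v _ _ hd =>
      simp only [Act.subj] at hq
      by_cases hch : (u, v) = (p, q)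
      · obtain ⟨rfl, rfl⟩ := Prod.ext_iff.1 hch
        obtain ⟨a', w', hc'⟩ := List.exists_cons_of_ne_nil hc
        simp only [Function.update_self, hc', List.cons_append, List.cons.injEq] at hb₂
        obtain ⟨rfl, rfl⟩ := hb₂
        refine ⟨_, .recv hr hc',
          .send_of_eq (by simpa [Function.update_of_ne hq] using hd) ?_⟩
        simp only [Function.update_self, Function.update_idem, Function.update_comm hq]
      · refine ⟨_, .recv hr (by simpa [Function.update_of_ne (Ne.symm hch)] using hb₂),
          .send_of_eq (by simpa [Function.update_of_ne hq] using hd) ?_⟩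
        simp only [Function.update_of_ne hch, Function.update_comm hq, Function.update_comm hch]
    | @recv u v _ _ _ hd hb₁ =>
      simp only [Act.subj] at hq
      have hch : (u, v) ≠ (p, q) := by simp [hq]
      refine ⟨_, .recv hr (by simpa [Function.update_of_ne (Ne.symm hch)] using hb₂),
        .recv_of_eq (by simpa [Function.update_of_ne hq] using hd)
          (by simpa [Function.update_of_ne hch] using hb₁) ?_⟩
      simp only [Function.update_comm hq, Function.update_comm hch]

theorem Steps.send_to_front (h : Steps S c (β ++ .send p q a :: γ) e) (hp : Idle p β) :
    Steps S c (.send p q a :: (β ++ γ)) e := by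
  induction β generalizing c with
  | nil => exact h
  | cons ℓ β ih =>
    rw [idle_cons] at hp
    obtain ⟨c₁, hs, h⟩ := steps_cons_iff.1 h
    obtain ⟨c₂, hsend, h⟩ := steps_cons_iff.1 (ih h hp.2)
    obtain ⟨c', hsend', hs'⟩ := hs.swap_send hsend hp.1
    exact .cons hsend' (.cons hs' h)

theorem Steps.recv_to_front (h : Steps S c (β ++ .recv p q a :: γ) e) (hq : Idle q β)
    (hc : c.buf (p, q) ≠ []) : Steps S c (.recv p q a :: (β ++ γ)) e := by
  induction β generalizing c with
  | nil => exact h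
  | cons ℓ β ih =>
    rw [idle_cons] at hq
    obtain ⟨c₁, hs, h⟩ := steps_cons_iff.1 h
    have hc₁ : c₁.buf (p, q) ≠ [] := fun h₁ =>
      hc (List.eq_nil_of_prefix_nil (h₁ ▸ hs.buf_prefix hq.1))
    obtain ⟨c₂, hrecv, h⟩ := steps_cons_iff.1 (ih h hq.2 hc₁)
    obtain ⟨c', hrecv', hs'⟩ := hs.swap_recv hrecv hq.1 hc
    exact .cons hrecv' (.cons hs' h)

theorem Reach1.exchange (hd : Reach1 S d) (hds : Stable d) (h₁ : Step S d (.send p q a) c₁)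
    (h₂ : Step S c₁ (.recv p q b) c₂) : Reach1 S c₂ ∧ Stable c₂ := by
  have hbuf₁ : ∀ ch, (c₁.buf ch).length ≤ 1 := by
    cases h₁
    intro ch
    by_cases hch : ch = (p, q) <;> simp [hch, hds _]
  have hstable : Stable c₂ := by
    cases h₁ with
    | send _ =>
      cases h₂ with
      | recv _ hb =>
        simp only [Function.update_self, hds (p, q), List.nil_append, List.cons.injEq] at hb
        intro ch
        by_cases hch : ch = (p, q) <;> simp [hch, hb.2, hds _]
  exact ⟨.step (.step hd h₁ hbuf₁) h₂ (by simp [hstable _]), hstable⟩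

theorem Steps.exists_first_send (hP : Proper S) (hD : DirectedSys S) (hN : NoMixed S) {t : Q}
    (h : Steps S c ψ e) (hp : ¬ Idle p ψ) (hs : S.delta p (c.st p) (.send p q a) t) :
    ∃ β a' γ, ψ = β ++ .send p q a' :: γ ∧ Idle p β := by
  obtain ⟨β, ℓ, γ, t', rfl, hβ, hℓ⟩ := h.exists_first_action hp
  obtain ⟨a', rfl⟩ := eq_send_of_delta hP hD hN hs hℓ
  exact ⟨β, a', γ, rfl, hβ⟩

theorem Steps.exists_first_recv (hP : Proper S) (hD : DirectedSys S) (hN : NoMixed S) {t : Q}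
    (h : Steps S c ψ e) (hq : ¬ Idle q ψ) (hr : S.delta q (c.st q) (.recv p q a) t) :
    ∃ β a' γ, ψ = β ++ .recv p q a' :: γ ∧ Idle q β := by
  obtain ⟨β, ℓ, γ, t', rfl, hβ, hℓ⟩ := h.exists_first_action hq
  obtain ⟨a', rfl⟩ := eq_recv_of_delta hP hD hN hr hℓ
  exact ⟨β, a', γ, rfl, hβ⟩

theorem Steps.not_idle_of_delta_send (hP : Proper S) (hD : DirectedSys S) (hN : NoMixed S)
    {t : Q} (h : Steps S c ψ e) (he : Stable e) (hp : ¬ Idle p ψ)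
    (hs : S.delta p (c.st p) (.send p q a) t) : ¬ Idle q ψ := by
  obtain ⟨β, a', γ, rfl, -⟩ := h.exists_first_send hP hD hN hp hs
  exact h.not_idle_of_send_mem he (List.mem_append_right β List.mem_cons_self)

theorem Steps.exchange_to_front (hP : Proper S) (hD : DirectedSys S) (hN : NoMixed S)
    {t t' : Q} (h : Steps S c ψ e) (he : Stable e) (hpq : p ≠ q) (hp : ¬ Idle p ψ)
    (hs : S.delta p (c.st p) (.send p q a) t) (hr : S.delta q (c.st q) (.recv p q b) t') :
    ∃ a a' ψ', Steps S c (.send p q a :: .recv p q a' :: ψ') e ∧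
      ψ'.length + 2 = ψ.length := by
  obtain ⟨β, a, γ, rfl, hβ⟩ := h.exists_first_send hP hD hN hp hs
  obtain ⟨c₁, hs₁, h₁⟩ := steps_cons_iff.1 (h.send_to_front hβ)
  have hbuf : c₁.buf (p, q) ≠ [] := by cases hs₁; simp
  rw [← hs₁.st_of_ne hpq] at hr
  obtain ⟨β', a', γ', hψ, hβ'⟩ :=
    h₁.exists_first_recv hP hD hN (h₁.not_idle_of_buf_ne_nil he hbuf) hr
  rw [hψ] at h₁
  refine ⟨a, a', β' ++ γ', .cons hs₁ (h₁.recv_to_front hβ' hbuf), ?_⟩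
  have hlen := congrArg List.length hψ
  simp only [List.length_append, List.length_cons] at hlen ⊢
  omega

theorem Match.head_ne_self_send {i : P} {st : P → Q} {L : List (Act P A)}
    (h : Match S i st L) (L' : List (Act P A)) : L ≠ .send i i a :: L' := by
  induction h with
  | nil => simp
  | alt _ _ _ _ _ ih => exact ih
  | dual hs _ _ =>
    intro hL
    obtain ⟨rfl, -⟩ := List.cons.inj hL
    obtain ⟨p, t, hpi, hsubj, -⟩ := hs
    exact hpi (by simpa [Act.dual, Act.subj] using hsubj.symm)

theorem MultipartyCompatible.not_delta_self_send (hMC : MultipartyCompatible S)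
    (hc : Reach1 S c) (hcs : Stable c) {t : Q} : ¬ S.delta p (c.st p) (.send p p a) t :=
  fun hs => (hMC c hc hcs p _ (.cons hs .nil)).head_ne_self_send [] rfl

theorem Match.exists_exchange (hP : Proper S) (hD : DirectedSys S) (hN : NoMixed S)
    {i y : P} {n : A} {t : Q} {st : P → Q} {L L' : List (Act P A)}
    (hM : Match S i st L) (hL : L = .send i y n :: L')
    (h : Steps S d ψ e) (hd : Stable d) (he : Stable e)
    (hself : ∀ p a t, ¬ S.delta p (d.st p) (.send p p a) t)
    (hi : ¬ Idle i ψ) (hs : S.delta i (d.st i) (.send i y n) t)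
    (hst : ∀ x, ¬ Idle x ψ → st x = d.st x) :
    ∃ p q, p ≠ q ∧ ¬ Idle p ψ ∧ (∃ a t, S.delta p (d.st p) (.send p q a) t) ∧
      ∃ b t, S.delta q (d.st q) (.recv p q b) t := by
  induction hM with
  | nil => cases hL
  | @alt st _ _ p q a _ _ _ h₁ h₂ _ ih =>
    obtain ⟨_, t₁, -, rfl, hd₁, rfl⟩ := h₁
    obtain ⟨_, t₂, -, rfl, hd₂, rfl⟩ := h₂
    simp only [Act.subj] at hd₁ hd₂ ih ⊢
    by_cases hp : Idle p ψ
    · have hq : Idle q ψ := by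
        by_contra hq
        have hpq : p ≠ q := by rintro rfl; exact hq hp
        rw [Function.update_of_ne hpq.symm, hst q hq] at hd₂
        obtain ⟨β, b, γ, rfl, -⟩ := h.exists_first_recv hP hD hN hq hd₂
        exact h.recv_not_mem_of_idle (hd _) hp (List.mem_append_right β List.mem_cons_self)
      refine ih hL fun x hx => ?_
      rw [Function.update_of_ne (by rintro rfl; exact hx hq),
        Function.update_of_ne (by rintro rfl; exact hx hp), hst x hx]
    · rw [hst p hp] at hd₁
      have hpq : p ≠ q := by rintro rfl; exact hself p a t₁ hd₁
      have hq := h.not_idle_of_delta_send hP hD hN he hp hd₁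
      rw [Function.update_of_ne hpq.symm, hst q hq] at hd₂
      exact ⟨p, q, hpq, hp, ⟨a, t₁, hd₁⟩, a, t₂, hd₂⟩
  | dual h₁ _ _ =>
    obtain ⟨rfl, -⟩ := List.cons.inj hL
    obtain ⟨_, t', hyi, rfl, hd', -⟩ := h₁
    simp only [Act.dual, Act.subj] at hyi hd'
    have hy := h.not_idle_of_delta_send hP hD hN he hi hs
    rw [hst y hy] at hd'
    exact ⟨i, y, Ne.symm hyi, hi, ⟨n, t, hs⟩, n, t', hd'⟩

theorem Match.exists_delta_send {i : P} {st : P → Q} {L : List (Act P A)}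
    (h : Match S i st (ℓ :: L)) (hℓ : ℓ.isSend = false) :
    ∃ p ℓ' t, ℓ'.isSend = true ∧ S.delta p (st p) ℓ' t := by
  cases h with
  | alt _ _ hs _ _ =>
    obtain ⟨p, t, -, -, hd, -⟩ := hs
    exact ⟨p, _, t, rfl, hd⟩
  | dual hs _ =>
    obtain ⟨p, t, -, -, hd, -⟩ := hs
    cases ℓ with
    | send => simp [Act.isSend] at hℓ
    | recv => exact ⟨p, _, t, rfl, hd⟩

theorem Reach1.of_steps_of_stable (hB : Basic S) (hMC : MultipartyCompatible S) (hd : Reach1 S d)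
    (hds : Stable d) (h : Steps S d ψ e) (he : Stable e) : Reach1 S e := by
  obtain ⟨hP, -, hD, hN⟩ := hB
  induction hn : ψ.length using Nat.strong_induction_on generalizing d ψ with
  | _ n ih =>
  cases h with
  | nil => exact hd
  | @cons _ _ _ ℓ _ h₁ h₂ =>
    obtain ⟨i, y, m, t, rfl, hs⟩ :
        ∃ i y m t, ℓ = .send i y m ∧ S.delta i (d.st i) (.send i y m) t := by
      cases h₁ with
      | send hs => exact ⟨_, _, _, _, rfl, hs⟩
      | recv _ hb => simp [hds _] at hb
    have h := Steps.cons h₁ h₂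
    obtain ⟨p, q, hpq, hp, ⟨a, t₁, hsend⟩, b, t₂, hrecv⟩ :=
      (hMC d hd hds i _ (.cons hs .nil)).exists_exchange hP hD hN rfl h hds he
        (fun _ _ _ => hMC.not_delta_self_send hd hds) (fun hi => (idle_cons.1 hi).1 rfl) hs
        (fun _ _ => rfl)
    obtain ⟨_, _, ψ', h', hlen⟩ := h.exchange_to_front hP hD hN he hpq hp hsend hrecv
    obtain ⟨c₁, hs₁, h'⟩ := steps_cons_iff.1 h'
    obtain ⟨c₂, hs₂, h'⟩ := steps_cons_iff.1 h'
    obtain ⟨hR, hS⟩ := hd.exchange hds hs₁ hs₂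
    exact ih ψ'.length (by omega) hR hS h' rfl

end Executions

/-- a basic, multiparty compatible system is deadlock-free:
no reachable configuration is a deadlock configuration. -/
theorem mc_deadlock_free [DecidableEq P] (S : Sys P Q A)
    (hB : Basic S) (hMC : MultipartyCompatible S) :
    ∀ c, Reach S c → ¬ Deadlock S c := by
  rintro c ⟨φ, hφ⟩ ⟨hstable, ⟨p, ℓ, t, hℓ⟩, hrecv⟩
  have hc : Reach1 S c := .of_steps_of_stable hB hMC .init (fun _ => rfl) hφ hstable
  obtain ⟨r, ℓ', t', hsend, hr⟩ :=
    (hMC c hc hstable p [ℓ] (.cons hℓ .nil)).exists_delta_send (hrecv p ℓ t hℓ)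
  simp [hrecv r ℓ' t' hr] at hsend
end

section
/- If a system of basic CFSMs is multiparty compatible, then every reachable configuration can be continued to a stable configuration, and every stable reachable configuration is reachable by a 1-bounded execution from the initial configuration. -/
variable {P Q A : Type}

section MCAux
set_option linter.unusedSectionVars false
set_option linter.unusedVariables false
set_option maxHeartbeats 1000000

variable [DecidableEq P] {S : Sys P Q A}

/-- Subjects of a list of actions. -/
abbrev subjs (τ : List (Act P A)) : List P := τ.map Act.subj

/-- The word of messages sent on a channel along a list of actions. -/
def sentW : List (Act P A) → P × P → List A
  | [], _ => []
  | Act.send p q a :: t, ch => if (p, q) = ch then a :: sentW t ch else sentW t ch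
  | Act.recv _ _ _ :: t, ch => sentW t ch

/-- The word of messages received on a channel along a list of actions. -/
def rcvdW : List (Act P A) → P × P → List A
  | [], _ => []
  | Act.recv p q a :: t, ch => if (p, q) = ch then a :: rcvdW t ch else rcvdW t ch
  | Act.send _ _ _ :: t, ch => rcvdW t ch

/-- Projection on the actions of machine m. -/
def projM (m : P) (τ : List (Act P A)) : List (Act P A) :=
  τ.filter (fun ℓ => decide (Act.subj ℓ = m))

lemma cfg_eq {st₁ st₂ : P → Q} {b₁ b₂ : P × P → List A}
    (h1 : st₁ = st₂) (h2 : b₁ = b₂) :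
    (Config.mk st₁ b₁ : Config P Q A) = Config.mk st₂ b₂ := by rw [h1, h2]

lemma step_cast {c d d' : Config P Q A} {ℓ : Act P A}
    (h : Step S c ℓ d) (he : d = d') : Step S c ℓ d' := he ▸ h

lemma steps_append {c d e : Config P Q A} {α β : List (Act P A)}
    (h1 : Steps S c α d) (h2 : Steps S d β e) : Steps S c (α ++ β) e := by
  induction h1 with
  | nil => exact h2
  | cons h hs ih => exact Steps.cons h (ih h2)

lemma steps_decomp {c e : Config P Q A} {α β : List (Act P A)}
    (h : Steps S c (α ++ β) e) : ∃ d, Steps S c α d ∧ Steps S d β e := by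
  induction α generalizing c with
  | nil => exact ⟨c, Steps.nil, h⟩
  | cons ℓ t ih =>
      cases h with
      | cons h1 h2 =>
          obtain ⟨d, hd1, hd2⟩ := ih h2
          exact ⟨d, Steps.cons h1 hd1, hd2⟩

lemma steps_nil_eq {c d : Config P Q A} (h : Steps S c [] d) : d = c := by
  cases h; rfl

lemma st_const {c d : Config P Q A} {τ : List (Act P A)} {m : P}
    (h : Steps S c τ d) (hm : m ∉ subjs τ) : d.st m = c.st m := by
  induction h with
  | nil => rfl
  | @cons c c' c'' ℓ ℓs h hs ih =>
      simp only [subjs, List.map_cons, List.mem_cons] at hm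
      push_neg at hm
      have h2 := ih hm.2
      rw [h2]
      cases h with
      | send hδ => exact Function.update_of_ne (by simpa [Act.subj] using hm.1) _ _
      | recv hδ hb => exact Function.update_of_ne (by simpa [Act.subj] using hm.1) _ _

lemma bufq {c d : Config P Q A} {τ : List (Act P A)}
    (h : Steps S c τ d) (ch : P × P) :
    c.buf ch ++ sentW τ ch = rcvdW τ ch ++ d.buf ch := by
  induction h with
  | nil => simp [sentW, rcvdW]
  | @cons c c' c'' ℓ ℓs h hs ih =>
      cases h with
      | @send p q a q' hδ =>
          have ih' : Function.update c.buf (p, q) (c.buf (p, q) ++ [a]) ch ++ sentW ℓs ch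
              = rcvdW ℓs ch ++ c''.buf ch := ih
          simp only [sentW, rcvdW]
          by_cases hch : (p, q) = ch
          · subst hch
            rw [Function.update_self] at ih'
            rw [if_pos rfl, ← ih']
            simp
          · rw [Function.update_of_ne (fun h => hch h.symm)] at ih'
            rw [if_neg hch, ih']
      | @recv p q a q' w hδ hb =>
          have ih' : Function.update c.buf (p, q) w ch ++ sentW ℓs ch
              = rcvdW ℓs ch ++ c''.buf ch := ih
          simp only [sentW, rcvdW]
          by_cases hch : (p, q) = ch
          · subst hch
            rw [Function.update_self] at ih'
            rw [if_pos rfl, hb]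
            simp only [List.cons_append]
            rw [ih']
          · rw [Function.update_of_ne (fun h => hch h.symm)] at ih'
            rw [if_neg hch, ih']

lemma sentW_append (α β : List (Act P A)) (ch : P × P) :
    sentW (α ++ β) ch = sentW α ch ++ sentW β ch := by
  induction α with
  | nil => simp [sentW]
  | cons ℓ t ih =>
      cases ℓ with
      | send p q a =>
          simp only [List.cons_append, sentW, List.append_eq]
          by_cases hch : (p,q) = ch
          · rw [if_pos hch, if_pos hch, ih]; rfl
          · rw [if_neg hch, if_neg hch, ih]
      | recv p q a =>
          simp only [List.cons_append, sentW, List.append_eq]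
          exact ih

lemma sentW_eq_nil {u v : P} {τ : List (Act P A)} (h : u ∉ subjs τ) :
    sentW τ (u, v) = [] := by
  induction τ with
  | nil => rfl
  | cons ℓ t ih =>
      simp only [subjs, List.map_cons, List.mem_cons] at h
      push_neg at h
      cases ℓ with
      | send p q a =>
          have : (p, q) ≠ (u, v) := by
            intro hc; apply h.1; rw [(Prod.mk.injEq _ _ _ _).mp hc |>.1]; rfl
          simp [sentW, this, ih h.2]
      | recv p q a => simp [sentW, ih h.2]

lemma rcvdW_eq_nil {u v : P} {τ : List (Act P A)} (h : v ∉ subjs τ) :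
    rcvdW τ (u, v) = [] := by
  induction τ with
  | nil => rfl
  | cons ℓ t ih =>
      simp only [subjs, List.map_cons, List.mem_cons] at h
      push_neg at h
      cases ℓ with
      | recv p q a =>
          have : (p, q) ≠ (u, v) := by
            intro hc; apply h.1; rw [(Prod.mk.injEq _ _ _ _).mp hc |>.2]; rfl
          simp [rcvdW, this, ih h.2]
      | send p q a => simp [rcvdW, ih h.2]

lemma mem_of_sentW {u v : P} {τ : List (Act P A)} (h : sentW τ (u, v) ≠ []) :
    u ∈ subjs τ := by
  induction τ with
  | nil => exact absurd rfl h
  | cons ℓ t ih =>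
      cases ℓ with
      | send p q a =>
          by_cases hch : (p, q) = (u, v)
          · have := ((Prod.mk.injEq _ _ _ _).mp hch).1
            subst this
            simp [Act.subj]
          · simp only [sentW, if_neg hch] at h
            simp [Act.subj, ih h]
      | recv p q a =>
          simp only [sentW] at h
          simp [Act.subj, ih h]

lemma localtr_proj {c d : Config P Q A} {τ : List (Act P A)} {m : P}
    (h : Steps S c τ d) : LocalTr S m (c.st m) (projM m τ) := by
  induction h with
  | nil => exact LocalTr.nil
  | @cons c c' c'' ℓ ℓs h hs ih =>
      cases h with
      | @send p q a q' hδ =>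
          by_cases hm : p = m
          · subst hm
            have h1 : projM p (Act.send p q a :: ℓs) = Act.send p q a :: projM p ℓs := by
              simp [projM, Act.subj]
            rw [h1]
            refine LocalTr.cons hδ ?_
            have ih' : LocalTr S p (Function.update c.st p q' p) (projM p ℓs) := ih
            rwa [Function.update_self] at ih'
          · have h1 : projM m (Act.send p q a :: ℓs) = projM m ℓs := by
              simp [projM, Act.subj, hm]
            rw [h1]
            have ih' : LocalTr S m (Function.update c.st p q' m) (projM m ℓs) := ih
            rwa [Function.update_of_ne (fun hc => hm hc.symm)] at ih'
      | @recv p q a q' w hδ hb =>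
          by_cases hm : q = m
          · subst hm
            have h1 : projM q (Act.recv p q a :: ℓs) = Act.recv p q a :: projM q ℓs := by
              simp [projM, Act.subj]
            rw [h1]
            refine LocalTr.cons hδ ?_
            have ih' : LocalTr S q (Function.update c.st q q' q) (projM q ℓs) := ih
            rwa [Function.update_self] at ih'
          · have h1 : projM m (Act.recv p q a :: ℓs) = projM m ℓs := by
              simp [projM, Act.subj, hm]
            rw [h1]
            have ih' : LocalTr S m (Function.update c.st q q' m) (projM m ℓs) := ih
            rwa [Function.update_of_ne (fun hc => hm hc.symm)] at ih'

lemma firstof {m : P} {τ : List (Act P A)} (h : m ∈ subjs τ) :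
    ∃ α ℓ β, τ = α ++ ℓ :: β ∧ Act.subj ℓ = m ∧ m ∉ subjs α := by
  induction τ with
  | nil => simp [subjs] at h
  | cons ℓ t ih =>
      by_cases hm : Act.subj ℓ = m
      · exact ⟨[], ℓ, t, rfl, hm, by simp⟩
      · have h2 : m ∈ subjs t := by
          simp only [subjs, List.map_cons, List.mem_cons] at h
          rcases h with h | h
          · exact absurd h.symm hm
          · exact h
        obtain ⟨α, ℓ', β, h1, h2, h3⟩ := ih h2
        refine ⟨ℓ :: α, ℓ', β, by rw [h1]; rfl, h2, ?_⟩
        simp only [subjs, List.map_cons, List.mem_cons]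
        push_neg
        exact ⟨fun hc => hm hc.symm, h3⟩

lemma lsplit {u : P} :
    ∀ (l₁ l₂ : List (Act P A)) (x y : Act P A) (t₁ t₂ : List (Act P A)),
      l₁ ++ x :: t₁ = l₂ ++ y :: t₂ → u ∉ subjs l₁ → u ∈ subjs l₂ →
      ∃ γ, l₂ = l₁ ++ x :: γ := by
  intro l₁
  induction l₁ with
  | nil =>
      intro l₂ x y t₁ t₂ heq h1 h2
      cases l₂ with
      | nil => simp [subjs] at h2
      | cons z l₂' =>
          simp only [List.nil_append, List.cons_append, List.cons.injEq] at heq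
          exact ⟨l₂', by rw [heq.1]; rfl⟩
  | cons w l₁' ih =>
      intro l₂ x y t₁ t₂ heq h1 h2
      cases l₂ with
      | nil => simp [subjs] at h2
      | cons z l₂' =>
          simp only [List.cons_append, List.cons.injEq] at heq
          simp only [subjs, List.map_cons, List.mem_cons] at h1 h2
          push_neg at h1
          have h2' : u ∈ subjs l₂' := by
            rcases h2 with h2 | h2
            · rw [← heq.1] at h2; exact absurd h2 h1.1
            · exact h2
          obtain ⟨γ, hγ⟩ := ih l₂' x y t₁ t₂ heq.2 h1.2 h2'
          exact ⟨γ, by rw [heq.1, hγ]; rfl⟩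

lemma stidle {c d : Config P Q A} {τ : List (Act P A)} {r : P} {v : Q}
    (h : Steps S c τ d) (hr : r ∉ subjs τ) :
    Steps S ⟨Function.update c.st r v, c.buf⟩ τ ⟨Function.update d.st r v, d.buf⟩ := by
  induction h with
  | nil => exact Steps.nil
  | @cons c c' c'' ℓ ℓs h hs ih =>
      simp only [subjs, List.map_cons, List.mem_cons] at hr
      push_neg at hr
      refine Steps.cons ?_ (ih hr.2)
      cases h with
      | @send p q a q₂ hδ =>
          have hp : p ≠ r := by
            intro hc; exact hr.1 (by simp [Act.subj, hc])
          have hδ' : S.delta p ((Function.update c.st r v) p) (.send p q a) q₂ := by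
            rwa [Function.update_of_ne hp]
          exact step_cast (Step.send hδ')
            (cfg_eq (Function.update_comm (fun hc => hp hc.symm) _ _ _) rfl)
      | @recv p q a q₂ w hδ hb =>
          have hp : q ≠ r := by
            intro hc; exact hr.1 (by simp [Act.subj, hc])
          have hδ' : S.delta q ((Function.update c.st r v) q) (.recv p q a) q₂ := by
            rwa [Function.update_of_ne hp]
          exact step_cast (Step.recv hδ' hb)
            (cfg_eq (Function.update_comm (fun hc => hp hc.symm) _ _ _) rfl)
lemma replayS {c d : Config P Q A} {α : List (Act P A)} {u v : P} {p₁ : Q} {a : A}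
    (h : Steps S c α d) (hu : u ∉ subjs α) (hv : v ∉ subjs α) :
    Steps S ⟨Function.update c.st u p₁, Function.update c.buf (u, v) (c.buf (u, v) ++ [a])⟩
      α ⟨Function.update d.st u p₁, Function.update d.buf (u, v) (d.buf (u, v) ++ [a])⟩ := by
  induction h with
  | nil => exact Steps.nil
  | @cons c c' c'' ℓ ℓs h hs ih =>
      simp only [subjs, List.map_cons, List.mem_cons] at hu hv
      push_neg at hu hv
      refine Steps.cons ?_ (ih hu.2 hv.2)
      cases h with
      | @send p q a₂ q₂ hδ =>
          have hpu : p ≠ u := by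
            intro hc; exact hu.1 (by simp [Act.subj, hc])
          have hchn : (p, q) ≠ (u, v) := fun hc => hpu (congrArg Prod.fst hc)
          have hδ' : S.delta p ((Function.update c.st u p₁) p) (.send p q a₂) q₂ := by
            rwa [Function.update_of_ne hpu]
          refine step_cast (Step.send hδ')
            (cfg_eq (Function.update_comm (fun hc => hpu hc.symm) _ _ _) ?_)
          show Function.update (Function.update c.buf (u,v) (c.buf (u,v) ++ [a])) (p,q)
              ((Function.update c.buf (u,v) (c.buf (u,v) ++ [a])) (p,q) ++ [a₂]) = _
          rw [Function.update_of_ne hchn, Function.update_comm (fun hc => hchn hc.symm)]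
          show _ = Function.update (Function.update c.buf (p,q) (c.buf (p,q) ++ [a₂])) (u,v)
              ((Function.update c.buf (p,q) (c.buf (p,q) ++ [a₂])) (u,v) ++ [a])
          rw [Function.update_of_ne (fun hc => hchn hc.symm)]
      | @recv p q a₂ q₂ w hδ hb =>
          have hqu : q ≠ u := by
            intro hc; exact hu.1 (by simp [Act.subj, hc])
          have hqv : q ≠ v := by
            intro hc; exact hv.1 (by simp [Act.subj, hc])
          have hchn : (p, q) ≠ (u, v) := fun hc => hqv (congrArg Prod.snd hc)
          have hδ' : S.delta q ((Function.update c.st u p₁) q) (.recv p q a₂) q₂ := by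
            rwa [Function.update_of_ne hqu]
          have hb' : (Function.update c.buf (u,v) (c.buf (u,v) ++ [a])) (p, q) = a₂ :: w := by
            rwa [Function.update_of_ne hchn]
          refine step_cast (Step.recv hδ' hb')
            (cfg_eq (Function.update_comm (fun hc => hqu hc.symm) _ _ _) ?_)
          rw [Function.update_comm (fun hc => hchn hc.symm)]
          show _ = Function.update (Function.update c.buf (p,q) w) (u,v)
              ((Function.update c.buf (p,q) w) (u,v) ++ [a])
          rw [Function.update_of_ne (fun hc => hchn hc.symm)]
lemma replayR {u v : P} {y : Q} {a : A} (hne : u ≠ v) :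
    ∀ {c d : Config P Q A} {γ : List (Act P A)}, Steps S c γ d → v ∉ subjs γ →
    ∀ w₀, c.buf (u, v) = a :: w₀ →
    ∃ w₁, d.buf (u, v) = a :: w₁ ∧
      Steps S ⟨Function.update c.st v y, Function.update c.buf (u, v) w₀⟩ γ
        ⟨Function.update d.st v y, Function.update d.buf (u, v) w₁⟩ := by
  intro c d γ h
  induction h with
  | nil =>
      intro _ w₀ hb
      exact ⟨w₀, hb, Steps.nil⟩
  | @cons c c' c'' ℓ ℓs h hs ih =>
      intro hv w₀ hb
      simp only [subjs, List.map_cons, List.mem_cons] at hv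
      push_neg at hv
      cases h with
      | @send p q a₂ q₂ hδ =>
          have hpv : p ≠ v := by
            intro hc; exact hv.1 (by simp [Act.subj, hc])
          by_cases hch : (p, q) = (u, v)
          · have hpu : p = u := congrArg Prod.fst hch
            have hqv : q = v := congrArg Prod.snd hch
            subst hpu; subst hqv
            have hb1 : (⟨Function.update c.st p q₂,
                Function.update c.buf (p, q) (c.buf (p, q) ++ [a₂])⟩ : Config P Q A).buf (p, q)
                = a :: (w₀ ++ [a₂]) := by
              show (Function.update c.buf (p, q) (c.buf (p, q) ++ [a₂])) (p, q) = _
              rw [Function.update_self, hb]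
              rfl
            obtain ⟨w₁, hd, hsteps⟩ := ih hv.2 (w₀ ++ [a₂]) hb1
            refine ⟨w₁, hd, Steps.cons ?_ hsteps⟩
            have hδ' : S.delta p ((Function.update c.st q y) p) (.send p q a₂) q₂ := by
              rwa [Function.update_of_ne hpv]
            refine step_cast (Step.send hδ')
              (cfg_eq (Function.update_comm (fun hc => hpv hc.symm) _ _ _) ?_)
            show Function.update (Function.update c.buf (p,q) w₀) (p,q)
                ((Function.update c.buf (p,q) w₀) (p,q) ++ [a₂]) = _
            rw [Function.update_self, Function.update_idem]
            show _ = Function.update (Function.update c.buf (p,q) (c.buf (p,q) ++ [a₂])) (p,q)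
                (w₀ ++ [a₂])
            rw [Function.update_idem]
          · have hb1 : (⟨Function.update c.st p q₂,
                Function.update c.buf (p, q) (c.buf (p, q) ++ [a₂])⟩ : Config P Q A).buf (u, v)
                = a :: w₀ := by
              show (Function.update c.buf (p, q) (c.buf (p, q) ++ [a₂])) (u, v) = _
              rwa [Function.update_of_ne (fun hc => hch hc.symm)]
            obtain ⟨w₁, hd, hsteps⟩ := ih hv.2 w₀ hb1
            refine ⟨w₁, hd, Steps.cons ?_ hsteps⟩
            have hδ' : S.delta p ((Function.update c.st v y) p) (.send p q a₂) q₂ := by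
              rwa [Function.update_of_ne hpv]
            refine step_cast (Step.send hδ')
              (cfg_eq (Function.update_comm (fun hc => hpv hc.symm) _ _ _) ?_)
            show Function.update (Function.update c.buf (u,v) w₀) (p,q)
                ((Function.update c.buf (u,v) w₀) (p,q) ++ [a₂]) = _
            rw [Function.update_of_ne hch, Function.update_comm (fun hc => hch hc.symm)]
      | @recv p q a₂ q₂ w hδ hbq =>
          have hqv : q ≠ v := by
            intro hc; exact hv.1 (by simp [Act.subj, hc])
          have hch : (p, q) ≠ (u, v) := fun hc => hqv (congrArg Prod.snd hc)
          have hb1 : (⟨Function.update c.st q q₂,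
              Function.update c.buf (p, q) w⟩ : Config P Q A).buf (u, v) = a :: w₀ := by
            show (Function.update c.buf (p, q) w) (u, v) = _
            rwa [Function.update_of_ne (fun hc => hch hc.symm)]
          obtain ⟨w₁, hd, hsteps⟩ := ih hv.2 w₀ hb1
          refine ⟨w₁, hd, Steps.cons ?_ hsteps⟩
          have hδ' : S.delta q ((Function.update c.st v y) q) (.recv p q a₂) q₂ := by
            rwa [Function.update_of_ne hqv]
          have hbq' : (Function.update c.buf (u, v) w₀) (p, q) = a₂ :: w := by
            rwa [Function.update_of_ne hch]
          refine step_cast (Step.recv hδ' hbq')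
            (cfg_eq (Function.update_comm (fun hc => hqv hc.symm) _ _ _) ?_)
          rw [Function.update_comm (fun hc => hch hc.symm)]
lemma removeS {c₀ c : Config P Q A} {α β : List (Act P A)} {u v : P} {a : A}
    (h : Steps S c₀ (α ++ Act.send u v a :: β) c)
    (hu : u ∉ subjs α) (hv : v ∉ subjs α) :
    ∃ p₁, S.delta u (c₀.st u) (.send u v a) p₁ ∧
      Steps S ⟨Function.update c₀.st u p₁,
               Function.update c₀.buf (u, v) (c₀.buf (u, v) ++ [a])⟩ (α ++ β) c := by
  obtain ⟨e, h1, h2⟩ := steps_decomp h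
  cases h2 with
  | cons hstp hrest =>
      cases hstp with
      | @send _ _ _ q₂ hδ =>
          rw [st_const h1 hu] at hδ
          exact ⟨q₂, hδ, steps_append (replayS h1 hu hv) hrest⟩
lemma removeR {d c : Config P Q A} {γ η : List (Act P A)} {u v : P} {a : A} {w₀ : List A}
    (h : Steps S d (γ ++ Act.recv u v a :: η) c)
    (hv : v ∉ subjs γ) (hne : u ≠ v) (hbuf : d.buf (u, v) = a :: w₀) :
    ∃ y, S.delta v (d.st v) (.recv u v a) y ∧
      Steps S ⟨Function.update d.st v y, Function.update d.buf (u, v) w₀⟩ (γ ++ η) c := by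
  obtain ⟨e, h1, h2⟩ := steps_decomp h
  cases h2 with
  | cons hstp hrest =>
      cases hstp with
      | @recv _ _ _ q₂ w hδ hbq =>
          obtain ⟨w₁, hd, hsteps⟩ := replayR (y := q₂) hne h1 hv w₀ hbuf
          have hw : w = w₁ := by
            rw [hbq] at hd
            exact (List.cons.injEq _ _ _ _).mp hd |>.2
          rw [st_const h1 hv] at hδ
          refine ⟨q₂, hδ, steps_append hsteps ?_⟩
          rw [← hw]
          exact hrest
lemma match_ne {i : P} :
    ∀ {st : P → Q} {ℓs : List (Act P A)}, Match S i st ℓs →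
      ∀ (ℓ : Act P A) (t : List (Act P A)), ℓs = ℓ :: t → Act.subj (Act.dual ℓ) ≠ i := by
  intro st ℓs hM
  induction hM with
  | nil => intro ℓ t heq; simp at heq
  | alt _ _ _ _ _ ih => exact ih
  | @dual st st' ℓ₀ ℓs₀ hP hM ih =>
      intro ℓ t heq
      obtain ⟨pp, z, hne, hsubj, _, _⟩ := hP
      have hℓ : ℓ₀ = ℓ := ((List.cons.injEq _ _ _ _).mp heq).1
      subst hℓ
      rw [hsubj]
      exact hne
lemma noself (hMC : MultipartyCompatible S) {c₀ : Config P Q A} {u : P} {a : A} {x : Q}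
    (hs0 : Stable c₀) (hr0 : Reach1 S c₀)
    (hδ : S.delta u (c₀.st u) (.send u u a) x) : False := by
  have hM := hMC c₀ hr0 hs0 u [Act.send u u a] (LocalTr.cons hδ LocalTr.nil)
  exact match_ne hM (Act.send u u a) [] rfl (by simp [Act.dual, Act.subj])
lemma matchRecep (hD : DirectedSys S) (hNM : NoMixed S) {u v : P} {a'' : A} :
    ∀ {st : P → Q} {ℓs : List (Act P A)}, Match S u st ℓs →
      ℓs = [Act.send u v a''] →
      ∀ (b : A) (y₀ : Q), S.delta v (st v) (.recv u v b) y₀ →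
      ∃ y, S.delta v (st v) (.recv u v a'') y := by
  intro st ℓs hM
  induction hM with
  | nil => intro heq; simp at heq
  | @alt st st1 st2 p₂ q₂ c₂ ℓs₀ hp₂ hq₂ hPs hPr hM ih =>
      intro heq b y₀ hqb
      obtain ⟨pp, z, hppne, hsubj, hδs, hst1⟩ := hPs
      have hpp : pp = p₂ := by simpa [Act.subj] using hsubj.symm
      rw [hpp] at hδs hst1
      obtain ⟨qq, y₂, hqqne, hsubj2, hδr, hst2⟩ := hPr
      have hqq : qq = q₂ := by simpa [Act.subj] using hsubj2.symm
      rw [hqq] at hδr hst2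
      by_cases hp2v : p₂ = v
      · rw [hp2v] at hδs
        exact absurd (hNM _ _ _ _ _ _ hδs hqb) (by simp [Act.isSend])
      by_cases hq2v : q₂ = v
      · rw [hst1] at hδr
        rw [hq2v, Function.update_of_ne (fun hc => hp2v hc.symm)] at hδr
        have := hD _ _ _ _ _ _ hδr hqb
        simp [Act.partner] at this
        exact absurd this hp₂
      · have hstv : st2 v = st v := by
          rw [hst2, hst1, Function.update_of_ne (fun hc => hq2v hc.symm),
              Function.update_of_ne (fun hc => hp2v hc.symm)]
        have hqb' : S.delta v (st2 v) (.recv u v b) y₀ := by rwa [hstv]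
        obtain ⟨y, hy⟩ := ih heq b y₀ hqb'
        rw [hstv] at hy
        exact ⟨y, hy⟩
  | @dual st st' ℓ₀ ℓs₀ hP hM ih =>
      intro heq b y₀ hqb
      have hℓ : ℓ₀ = Act.send u v a'' := ((List.cons.injEq _ _ _ _).mp heq).1
      subst hℓ
      obtain ⟨pp, z, hppne, hsubj, hδ, _⟩ := hP
      have hppv : pp = v := by simpa [Act.dual, Act.subj] using hsubj.symm
      subst hppv
      exact ⟨z, hδ⟩
lemma subq (hD : DirectedSys S) (hNM : NoMixed S)
    {c₀ c : Config P Q A} {τ : List (Act P A)} {u v : P} {b₀ : A} {y₀ : Q}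
    (hs0 : Stable c₀) (hst : Steps S c₀ τ c)
    (hq : S.delta v (c₀.st v) (.recv u v b₀) y₀) (hvact : v ∈ subjs τ) :
    ∃ α₂ b η w, τ = α₂ ++ Act.recv u v b :: η ∧ v ∉ subjs α₂ ∧
      sentW α₂ (u, v) = b :: w := by
  obtain ⟨α₂, ℓf, η, hτ₂, hsubj, hvα₂⟩ := firstof hvact
  obtain ⟨e, h1, h2⟩ := steps_decomp (hτ₂ ▸ hst)
  cases h2 with
  | cons hstp hrest =>
      cases hstp with
      | @send p₃ q₃ a₃ q₂ hδ =>
          have hp3 : p₃ = v := by simpa [Act.subj] using hsubj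
          subst hp3
          rw [st_const h1 hvα₂] at hδ
          exact absurd (hNM _ _ _ _ _ _ hδ hq) (by simp [Act.isSend])
      | @recv p₃ q₃ a₃ q₂ w hδ hbq =>
          have hq3 : q₃ = v := by simpa [Act.subj] using hsubj
          subst hq3
          rw [st_const h1 hvα₂] at hδ
          have hp3 : p₃ = u := by
            have := hD _ _ _ _ _ _ hδ hq
            simpa [Act.partner] using this
          subst hp3
          have hb := bufq h1 (p₃, q₃)
          rw [hs0 (p₃, q₃), rcvdW_eq_nil hvα₂] at hb
          simp only [List.nil_append] at hb
          rw [hbq] at hb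
          exact ⟨α₂, a₃, η, w, hτ₂, hvα₂, hb⟩
lemma sub1 (hD : DirectedSys S) (hNM : NoMixed S)
    {c₀ c : Config P Q A} {τ α₁ β₁ : List (Act P A)} {u v : P} {b₀ a' : A} {y₀ : Q}
    (hs0 : Stable c₀) (hst : Steps S c₀ τ c)
    (hq : S.delta v (c₀.st v) (.recv u v b₀) y₀) (hvact : v ∈ subjs τ)
    (hτ₁ : τ = α₁ ++ Act.send u v a' :: β₁) (huα₁ : u ∉ subjs α₁) :
    ∃ γ η, τ = α₁ ++ Act.send u v a' :: γ ++ Act.recv u v a' :: η ∧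
      v ∉ subjs α₁ ∧ v ∉ subjs γ := by
  obtain ⟨α₂, b, η, w, hτ₂, hvα₂, hsent⟩ := subq hD hNM hs0 hst hq hvact
  have hu2 : u ∈ subjs α₂ := mem_of_sentW (by rw [hsent]; simp)
  obtain ⟨γ, hα₂⟩ := lsplit α₁ α₂ (Act.send u v a') (Act.recv u v b) β₁ η
      (hτ₁.symm.trans hτ₂) huα₁ hu2
  have hsent2 : sentW α₂ (u, v) = a' :: sentW γ (u, v) := by
    rw [hα₂, sentW_append, sentW_eq_nil huα₁]
    simp [sentW]
  have hba : b = a' := by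
    rw [hsent2] at hsent
    exact (((List.cons.injEq _ _ _ _).mp hsent).1).symm
  rw [hα₂] at hvα₂ hτ₂
  have hsplit : subjs (α₁ ++ Act.send u v a' :: γ)
      = subjs α₁ ++ Act.subj (Act.send u v a') :: subjs γ := by
    simp [subjs]
  rw [hsplit] at hvα₂
  refine ⟨γ, η, ?_, ?_, ?_⟩
  · rw [hτ₂, hba]
    try simp [List.append_assoc]
  · exact fun hm => hvα₂ (List.mem_append_left _ hm)
  · exact fun hm => hvα₂ (List.mem_append_right _ (List.mem_cons_of_mem _ hm))
/-- Conclusion A : a factorable matched pair at the head of its two machines. -/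
def CAprop (τ : List (Act P A)) : Prop :=
  ∃ (p q : P) (a' : A) (α γ η : List (Act P A)), p ≠ q ∧
    τ = α ++ Act.send p q a' :: γ ++ Act.recv p q a' :: η ∧
    p ∉ subjs α ∧ q ∉ subjs α ∧ q ∉ subjs γ

/-- Conclusion B : in a (possibly shifted) world, an idle machine can consume
the first pending message of some sender. -/
def CBprop (S : Sys P Q A) (c₀ c : Config P Q A) (τ : List (Act P A)) : Prop :=
  ∃ (c₀' c' : Config P Q A) (ξ : List (Act P A)) (p q : P) (a' : A) (y : Q),
    Stable c₀' ∧ Reach1 S c₀' ∧ Steps S c₀' τ c' ∧ Steps S c ξ c' ∧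
    ¬ Stable c ∧ q ∉ subjs τ ∧
    (∃ α β, τ = α ++ Act.send p q a' :: β ∧ p ∉ subjs α) ∧
    p ≠ q ∧ S.delta q (c₀'.st q) (.recv p q a') y

lemma key (hB : Basic S) (hMC : MultipartyCompatible S)
    {m qm : P} {am : A} {τt : List (Act P A)} :
    ∀ {st : P → Q} {ℓs : List (Act P A)}, Match S m st ℓs →
    ∀ (σt : List (Act P A)), ℓs = Act.send m qm am :: σt →
    ∀ (c₀ c : Config P Q A), st = c₀.st → Stable c₀ → Reach1 S c₀ →
      Steps S c₀ (Act.send m qm am :: τt) c →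
      CAprop (Act.send m qm am :: τt) ∨ CBprop S c₀ c (Act.send m qm am :: τt) := by
  intro st ℓs hM
  induction hM with
  | nil => intro σt heq; simp at heq
  | @alt st st1 st2 p' q' b ℓs₀ hp'm hq'm hPs hPr hM ih =>
      intro σt heq c₀ c hstq hs0 hr0 hst
      obtain ⟨hPRP, hDet, hD, hNM⟩ := hB
      obtain ⟨pp, z, hppne, hsubj, hδs, hst1⟩ := hPs
      have hpp : pp = p' := by simpa [Act.subj] using hsubj.symm
      rw [hpp] at hδs hst1
      obtain ⟨qq, y'', hqqne, hsubj2, hδr, hst2⟩ := hPr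
      have hqq : qq = q' := by simpa [Act.subj] using hsubj2.symm
      rw [hqq] at hδr hst2
      rw [hstq] at hδs
      by_cases hpq' : p' = q'
      · exact (noself hMC hs0 hr0 (by rw [hpq'] at hδs; exact hδs)).elim
      have hδr' : S.delta q' (c₀.st q') (.recv p' q' b) y'' := by
        rw [hst1, hstq] at hδr
        rwa [Function.update_of_ne (fun hc => hpq' hc.symm)] at hδr
      by_cases hp'act : p' ∈ subjs (Act.send m qm am :: τt)
      · -- p' acts in τ
        obtain ⟨α₁, ℓp, β₁, hτ₁, hsubjp, hp'α₁⟩ := firstof hp'act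
        obtain ⟨e, h1, h2⟩ := steps_decomp (hτ₁ ▸ hst)
        cases h2 with
        | cons hstp hrest =>
            cases hstp with
            | @recv p₃ q₃ a₃ q₂ w hδ3 hb3 =>
                have hq3 : q₃ = p' := by simpa [Act.subj] using hsubjp
                rw [hq3, st_const h1 hp'α₁] at hδ3
                exact absurd (hNM _ _ _ _ _ _ hδ3 hδs) (by simp [Act.isSend])
            | @send p₃ q₃ a₃ q₂ hδ3 =>
                have hp3 : p₃ = p' := by simpa [Act.subj] using hsubjp
                rw [hp3, st_const h1 hp'α₁] at hδ3
                have hq3 : q₃ = q' := by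
                  have := hD _ _ _ _ _ _ hδ3 hδs
                  simpa [Act.partner] using this
                rw [hq3] at hδ3
                rw [hp3, hq3] at hτ₁
                by_cases hq'act : q' ∈ subjs (Act.send m qm am :: τt)
                · obtain ⟨γ, η, hτeq, hv1, hv2⟩ :=
                    sub1 hD hNM hs0 hst hδr' hq'act hτ₁ hp'α₁
                  exact Or.inl ⟨p', q', a₃, α₁, γ, η, hpq', hτeq, hp'α₁, hv1, hv2⟩
                · have hMp' := hMC c₀ hr0 hs0 p' [Act.send p' q' a₃]
                    (LocalTr.cons hδ3 LocalTr.nil)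
                  obtain ⟨y, hy⟩ := matchRecep hD hNM hMp' rfl b y'' hδr'
                  refine Or.inr ⟨c₀, c, [], p', q', a₃, y, hs0, hr0, hst, Steps.nil, ?_,
                    hq'act, ⟨α₁, β₁, hτ₁, hp'α₁⟩, hpq', hy⟩
                  intro hsc
                  have hb := bufq hst (p', q')
                  rw [hs0 (p', q'), rcvdW_eq_nil hq'act, hsc (p', q')] at hb
                  simp only [List.nil_append, List.append_nil] at hb
                  rw [hτ₁, sentW_append] at hb
                  simp [sentW] at hb
      · -- p' idle in τ ⇒ q' idle too
        have hq'act : q' ∉ subjs (Act.send m qm am :: τt) := by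
          intro hq'mem
          obtain ⟨α₂, b₂, η₂, w₂, hτ₂, hvα₂, hsent₂⟩ :=
            subq hD hNM hs0 hst hδr' hq'mem
          have hmem : p' ∈ subjs α₂ := mem_of_sentW (by rw [hsent₂]; simp)
          apply hp'act
          rw [hτ₂]
          have hsplit : subjs (α₂ ++ Act.recv p' q' b₂ :: η₂)
              = subjs α₂ ++ Act.subj (Act.recv p' q' b₂) :: subjs η₂ := by simp [subjs]
          rw [hsplit]
          exact List.mem_append_left _ hmem
        -- shifted world c₀'
        have hbuf1 : (Function.update c₀.buf (p', q') (c₀.buf (p', q') ++ [b])) (p', q')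
            = b :: [] := by
          rw [Function.update_self, hs0 (p', q')]
          rfl
        have hδr2 : S.delta q' ((Function.update c₀.st p' z) q') (.recv p' q' b) y'' := by
          rwa [Function.update_of_ne (fun hc => hpq' hc.symm)]
        have hbufeq : Function.update
            (Function.update c₀.buf (p', q') (c₀.buf (p', q') ++ [b])) (p', q') []
            = c₀.buf := by
          funext ch
          by_cases hch : ch = (p', q')
          · rw [hch, Function.update_self, hs0 (p', q')]
          · rw [Function.update_of_ne hch, Function.update_of_ne hch]
        have hstep2' : Step S (⟨Function.update c₀.st p' z,
              Function.update c₀.buf (p', q') (c₀.buf (p', q') ++ [b])⟩ : Config P Q A)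
            (Act.recv p' q' b)
            (⟨Function.update (Function.update c₀.st p' z) q' y'', c₀.buf⟩ : Config P Q A) :=
          step_cast (Step.recv hδr2 hbuf1) (cfg_eq rfl hbufeq)
        have hs0' : Stable (⟨Function.update (Function.update c₀.st p' z) q' y'',
            c₀.buf⟩ : Config P Q A) := hs0
        have hr0' : Reach1 S (⟨Function.update (Function.update c₀.st p' z) q' y'',
            c₀.buf⟩ : Config P Q A) := by
          refine Reach1.step (Reach1.step hr0 (Step.send hδs) ?_) hstep2' ?_
          · intro ch
            show ((Function.update c₀.buf (p', q') (c₀.buf (p', q') ++ [b])) ch).length ≤ 1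
            by_cases hch : ch = (p', q')
            · rw [hch, Function.update_self, hs0 (p', q')]
              simp
            · rw [Function.update_of_ne hch, hs0 ch]
              simp
          · intro ch
            show (c₀.buf ch).length ≤ 1
            rw [hs0 ch]
            simp
        have hτsteps' : Steps S
            (⟨Function.update (Function.update c₀.st p' z) q' y'', c₀.buf⟩ : Config P Q A)
            (Act.send m qm am :: τt)
            (⟨Function.update (Function.update c.st p' z) q' y'', c.buf⟩ : Config P Q A) :=
          stidle (stidle hst hp'act) hq'act
        have hst2c : st2 = (⟨Function.update (Function.update c₀.st p' z) q' y'',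
            c₀.buf⟩ : Config P Q A).st := by
          rw [hst2, hst1, hstq]
        rcases ih σt heq _ _ hst2c hs0' hr0' hτsteps' with hCA | hCB
        · exact Or.inl hCA
        · obtain ⟨c₀'', c'', ξ, u, v, a', y, h1, h2, h3, h4, h5, h6, h7, h8, h9⟩ := hCB
          have hcbuf : c.buf (p', q') = [] := by
            have hb := bufq hst (p', q')
            rw [hs0 (p', q'), sentW_eq_nil hp'act, rcvdW_eq_nil hq'act] at hb
            simpa using hb.symm
          have hstA : Step S c (Act.send p' q' b)
              (⟨Function.update c.st p' z,
                Function.update c.buf (p', q') (c.buf (p', q') ++ [b])⟩ : Config P Q A) := by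
            refine Step.send ?_
            rwa [st_const hst hp'act]
          have hbufA : (Function.update c.buf (p', q') (c.buf (p', q') ++ [b])) (p', q')
              = b :: [] := by
            rw [Function.update_self, hcbuf]
            rfl
          have hδrA : S.delta q' ((Function.update c.st p' z) q') (.recv p' q' b) y'' := by
            rw [Function.update_of_ne (fun hc => hpq' hc.symm), st_const hst hq'act]
            exact hδr'
          have hbufeqc : Function.update
              (Function.update c.buf (p', q') (c.buf (p', q') ++ [b])) (p', q') []
              = c.buf := by
            funext ch
            by_cases hch : ch = (p', q')
            · rw [hch, Function.update_self, hcbuf]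
            · rw [Function.update_of_ne hch, Function.update_of_ne hch]
          have hstB : Step S (⟨Function.update c.st p' z,
                Function.update c.buf (p', q') (c.buf (p', q') ++ [b])⟩ : Config P Q A)
              (Act.recv p' q' b)
              (⟨Function.update (Function.update c.st p' z) q' y'', c.buf⟩ : Config P Q A) :=
            step_cast (Step.recv hδrA hbufA) (cfg_eq rfl hbufeqc)
          refine Or.inr ⟨c₀'', c'', Act.send p' q' b :: Act.recv p' q' b :: ξ, u, v, a', y,
            h1, h2, h3, Steps.cons hstA (Steps.cons hstB h4), ?_, h6, h7, h8, h9⟩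
          exact fun hsc => h5 (fun ch => hsc ch)
  | @dual st st' ℓ₀ ℓs₀ hP hM ih =>
      intro σt heq c₀ c hstq hs0 hr0 hst
      obtain ⟨hPRP, hDet, hD, hNM⟩ := hB
      have hℓ : ℓ₀ = Act.send m qm am := ((List.cons.injEq _ _ _ _).mp heq).1
      subst hℓ
      obtain ⟨pp, y', hppne, hsubj, hδ, _⟩ := hP
      have hppq : pp = qm := by simpa [Act.dual, Act.subj] using hsubj.symm
      rw [hppq] at hδ hppne
      rw [hstq] at hδ
      have hδ' : S.delta qm (c₀.st qm) (.recv m qm am) y' := hδ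
      have hmq : m ≠ qm := fun hc => hppne hc.symm
      by_cases hq'act : qm ∈ subjs (Act.send m qm am :: τt)
      · obtain ⟨γ, η, hτeq, hv1, hv2⟩ := sub1 hD hNM hs0 hst hδ' hq'act
          (show Act.send m qm am :: τt = [] ++ Act.send m qm am :: τt from rfl) (by simp)
        exact Or.inl ⟨m, qm, am, [], γ, η, hmq, hτeq, by simp, hv1, hv2⟩
      · refine Or.inr ⟨c₀, c, [], m, qm, am, y', hs0, hr0, hst, Steps.nil, ?_, hq'act,
          ⟨[], τt, rfl, by simp⟩, hmq, hδ'⟩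
        intro hsc
        have hb := bufq hst (m, qm)
        rw [hs0 (m, qm), rcvdW_eq_nil hq'act, hsc (m, qm)] at hb
        simp only [List.nil_append, List.append_nil] at hb
        simp [sentW] at hb

lemma ml (hB : Basic S) (hMC : MultipartyCompatible S) :
    ∀ (n : ℕ) (τ : List (Act P A)) (c₀ c : Config P Q A), τ.length ≤ n →
      Stable c₀ → Reach1 S c₀ → Steps S c₀ τ c →
      ((∃ ρ c₁, Steps S c ρ c₁ ∧ Stable c₁) ∧ (Stable c → Reach1 S c)) := by
  intro n
  induction n with
  | zero =>
      intro τ c₀ c hlen hs0 hr0 hst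
      have hτ : τ = [] := List.length_eq_zero_iff.mp (Nat.le_zero.mp hlen)
      subst hτ
      cases hst
      exact ⟨⟨[], c₀, Steps.nil, hs0⟩, fun _ => hr0⟩
  | succ n ihn =>
      intro τ c₀ c hlen hs0 hr0 hst
      cases hst with
      | nil => exact ⟨⟨[], c₀, Steps.nil, hs0⟩, fun _ => hr0⟩
      | @cons _ c₁ _ ℓ₀ τt hstp hrest =>
          cases hstp with
          | @recv p q a q₂ w hδ hb =>
              rw [hs0 (p, q)] at hb
              simp at hb
          | @send p q a q₂ hδ =>
              have hst' : Steps S c₀ (Act.send p q a :: τt) c :=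
                Steps.cons (Step.send hδ) hrest
              have hloc := localtr_proj (m := p) hst'
              have hproj : projM p (Act.send p q a :: τt) = Act.send p q a :: projM p τt := by
                simp [projM, Act.subj]
              rw [hproj] at hloc
              have hM := hMC c₀ hr0 hs0 p _ hloc
              rcases key (m := p) (qm := q) (am := a) (τt := τt) hB hMC hM (projM p τt) rfl
                  c₀ c rfl hs0 hr0 hst' with hCA | hCB
              · obtain ⟨u, v, a', α, γ, η, hne, hτeq, hpα, hqα, hqγ⟩ := hCA
                rw [hτeq] at hst'
                rw [List.append_assoc, List.cons_append] at hst'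
                obtain ⟨p₁, hδp, hst₁⟩ := removeS hst' hpα hqα
                have hst₁' : Steps S (⟨Function.update c₀.st u p₁,
                    Function.update c₀.buf (u, v) (c₀.buf (u, v) ++ [a'])⟩ : Config P Q A)
                    ((α ++ γ) ++ Act.recv u v a' :: η) c := by
                  rwa [List.append_assoc]
                have hqαγ : v ∉ subjs (α ++ γ) := by
                  have hsplit : subjs (α ++ γ) = subjs α ++ subjs γ := by simp [subjs]
                  rw [hsplit]
                  intro hm
                  rcases List.mem_append.mp hm with hm | hm
                  · exact hqα hm
                  · exact hqγ hm
                have hd₁buf : (Function.update c₀.buf (u, v) (c₀.buf (u, v) ++ [a'])) (u, v)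
                    = a' :: [] := by
                  rw [Function.update_self, hs0 (u, v)]
                  rfl
                obtain ⟨y, hδq, hst₂⟩ := removeR hst₁' hqαγ hne hd₁buf
                have hsd₂ : Stable (⟨Function.update (Function.update c₀.st u p₁) v y,
                    Function.update (Function.update c₀.buf (u, v)
                      (c₀.buf (u, v) ++ [a'])) (u, v) []⟩ : Config P Q A) := by
                  intro ch
                  show (Function.update (Function.update c₀.buf (u, v)
                      (c₀.buf (u, v) ++ [a'])) (u, v) []) ch = []
                  by_cases hch : ch = (u, v)
                  · rw [hch, Function.update_self]
                  · rw [Function.update_of_ne hch, Function.update_of_ne hch, hs0 ch]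
                have hrd₂ : Reach1 S (⟨Function.update (Function.update c₀.st u p₁) v y,
                    Function.update (Function.update c₀.buf (u, v)
                      (c₀.buf (u, v) ++ [a'])) (u, v) []⟩ : Config P Q A) := by
                  refine Reach1.step (Reach1.step hr0 (Step.send hδp) ?_)
                    (Step.recv hδq hd₁buf) ?_
                  · intro ch
                    show ((Function.update c₀.buf (u, v) (c₀.buf (u, v) ++ [a'])) ch).length ≤ 1
                    by_cases hch : ch = (u, v)
                    · rw [hch, Function.update_self, hs0 (u, v)]
                      simp
                    · rw [Function.update_of_ne hch, hs0 ch]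
                      simp
                  · intro ch
                    rw [hsd₂ ch]
                    simp
                have hlen2 : ((α ++ γ) ++ η).length ≤ n := by
                  have hle := congrArg List.length hτeq
                  simp only [List.length_cons, List.length_append] at hle hlen ⊢
                  omega
                exact ihn ((α ++ γ) ++ η) _ c hlen2 hsd₂ hrd₂ hst₂
              · obtain ⟨c₀', c', ξ, u, v, a', y, hs0', hr0', hτ', hξ, hnstab, hqidle,
                  ⟨α, β, hτdec, hpα⟩, hne, hδq⟩ := hCB
                refine ⟨?_, fun hsc => absurd hsc hnstab⟩
                have hqidle0 : v ∉ subjs (α ++ Act.send u v a' :: β) := by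
                  rw [← hτdec]
                  exact hqidle
                rw [hτdec] at hτ'
                have hsplit : subjs (α ++ Act.send u v a' :: β)
                    = subjs α ++ Act.subj (Act.send u v a') :: subjs β := by simp [subjs]
                have hqα : v ∉ subjs α := fun hm => hqidle0 (by rw [hsplit]; exact List.mem_append_left _ hm)
                have hqβ : v ∉ subjs β := fun hm => hqidle0
                  (by rw [hsplit]; exact List.mem_append_right _ (List.mem_cons_of_mem _ hm))
                obtain ⟨p₁, hδp, hst₁⟩ := removeS hτ' hpα hqα
                have hqαβ : v ∉ subjs (α ++ β) := by
                  have hsplit2 : subjs (α ++ β) = subjs α ++ subjs β := by simp [subjs]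
                  rw [hsplit2]
                  intro hm
                  rcases List.mem_append.mp hm with hm | hm
                  · exact hqα hm
                  · exact hqβ hm
                have hd₁buf : (Function.update c₀'.buf (u, v) (c₀'.buf (u, v) ++ [a'])) (u, v)
                    = a' :: [] := by
                  rw [Function.update_self, hs0' (u, v)]
                  rfl
                obtain ⟨w₁, hc'buf, hst₂⟩ := replayR (y := y) hne hst₁ hqαβ [] hd₁buf
                have hsd₂ : Stable (⟨Function.update (Function.update c₀'.st u p₁) v y,
                    Function.update (Function.update c₀'.buf (u, v)
                      (c₀'.buf (u, v) ++ [a'])) (u, v) []⟩ : Config P Q A) := by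
                  intro ch
                  show (Function.update (Function.update c₀'.buf (u, v)
                      (c₀'.buf (u, v) ++ [a'])) (u, v) []) ch = []
                  by_cases hch : ch = (u, v)
                  · rw [hch, Function.update_self]
                  · rw [Function.update_of_ne hch, Function.update_of_ne hch, hs0' ch]
                have hδq1 : S.delta v ((Function.update c₀'.st u p₁) v) (.recv u v a') y := by
                  rwa [Function.update_of_ne (fun hc => hne hc.symm)]
                have hrd₂ : Reach1 S (⟨Function.update (Function.update c₀'.st u p₁) v y,
                    Function.update (Function.update c₀'.buf (u, v)
                      (c₀'.buf (u, v) ++ [a'])) (u, v) []⟩ : Config P Q A) := by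
                  refine Reach1.step (Reach1.step hr0' (Step.send hδp) ?_)
                    (Step.recv hδq1 hd₁buf) ?_
                  · intro ch
                    show ((Function.update c₀'.buf (u, v) (c₀'.buf (u, v) ++ [a'])) ch).length ≤ 1
                    by_cases hch : ch = (u, v)
                    · rw [hch, Function.update_self, hs0' (u, v)]
                      simp
                    · rw [Function.update_of_ne hch, hs0' ch]
                      simp
                  · intro ch
                    rw [hsd₂ ch]
                    simp
                have hlen2 : (α ++ β).length ≤ n := by
                  have hle := congrArg List.length hτdec
                  simp only [List.length_cons, List.length_append] at hle hlen ⊢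
                  omega
                obtain ⟨⟨ρ, c₁, hρ, hstab1⟩, _⟩ := ihn (α ++ β) _ _ hlen2 hsd₂ hrd₂ hst₂
                have hstR : Step S c' (Act.recv u v a')
                    (⟨Function.update c'.st v y, Function.update c'.buf (u, v) w₁⟩ : Config P Q A) := by
                  refine Step.recv ?_ hc'buf
                  rw [st_const hτ' hqidle0]
                  exact hδq
                exact ⟨ξ ++ Act.recv u v a' :: ρ, c₁,
                  steps_append hξ (Steps.cons hstR hρ), hstab1⟩

end MCAux
/-- in a basic, multiparty compatible system, every reachable
configuration can be continued to a stable configuration, and every stable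
reachable configuration is reachable by a 1-bounded execution. -/
theorem mc_stable_property [DecidableEq P] (S : Sys P Q A)
    (hB : Basic S) (hMC : MultipartyCompatible S) :
    (∀ c, Reach S c → ∃ φ c', Steps S c φ c' ∧ Stable c') ∧
    (∀ c, Reach S c → Stable c → Reach1 S c) := by
  constructor
  · intro c hc
    obtain ⟨φ, hφ⟩ := hc
    obtain ⟨⟨ρ, c₁, h1, h2⟩, _⟩ :=
      ml hB hMC φ.length φ (initConfig S) c le_rfl (fun ch => rfl) Reach1.init hφ
    exact ⟨ρ, c₁, h1, h2⟩
  · intro c hc hsc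
    obtain ⟨φ, hφ⟩ := hc
    exact (ml hB hMC φ.length φ (initConfig S) c le_rfl (fun ch => rfl)
      Reach1.init hφ).2 hsc
end

section
/- For two basic, multiparty compatible communicating systems S1 and S2, if S1 and S2 have the same 1-bound traces (S1 ≈₁ S2), then they have exactly the same traces (S1 ≈ S2). -/
variable {P Q A : Type}

/-- `φ` is an n-bound action sequence: along every prefix, on each channel
the number of sends never exceeds the number of matching receives by more
than n. -/
def Bounded [DecidableEq P] (n : ℕ) (φ : List (Act P A)) : Prop :=
  ∀ (k : ℕ) (p q : P),
    (φ.take k).countP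
      (fun ℓ => match ℓ with
        | Act.send p' q' _ => decide (p' = p ∧ q' = q)
        | _ => false) ≤
    (φ.take k).countP
      (fun ℓ => match ℓ with
        | Act.recv p' q' _ => decide (p' = p ∧ q' = q)
        | _ => false) + n

/-- `φ` is a trace of system `S`. -/
def TraceOf [DecidableEq P] (S : Sys P Q A) (φ : List (Act P A)) : Prop :=
  ∃ c, Steps S (initConfig S) φ c

/-!
Induction on the length of a trace `ψ ++ [ℓ]` of `S1`, with `i` the subject of `ℓ`. By induction
`ψ` is a trace of `S2`. Multiparty compatibility at the initial configuration turns the local run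
of machine `i` along `ψ ++ [ℓ]` into a 1-bounded trace of `S1` made of send/receive pairs whose
projection on `i` is the same local run; it is therefore a trace of `S2` too. Determinism of `S2`
then puts machine `i` of `S2`, after `ψ`, in a state enabling `ℓ`; and if `ℓ` is a receive, its
message is at the head of the buffer, since buffer contents depend only on the trace.
-/

inductive LocalRun (S : Sys P Q A) (p : P) : Q → List (Act P A) → Q → Prop
  | nil {q} : LocalRun S p q [] q
  | cons {q q' r ℓ ℓs} : S.delta p q ℓ q' → LocalRun S p q' ℓs r →
      LocalRun S p q (ℓ :: ℓs) r

theorem LocalRun.localTr {S : Sys P Q A} {p : P} {q r : Q} {w : List (Act P A)}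
    (h : LocalRun S p q w r) : LocalTr S p q w := by
  induction h with
  | nil => exact .nil
  | cons hd _ ih => exact .cons hd ih

theorem LocalRun.unique {S : Sys P Q A} (hD : Deterministic S) {p : P} {q r r' : Q}
    {w : List (Act P A)} (h : LocalRun S p q w r) (h' : LocalRun S p q w r') : r = r' := by
  induction h with
  | nil => cases h'; rfl
  | cons hd _ ih =>
    obtain _ | ⟨hd', hrest'⟩ := h'
    cases hD _ _ _ _ _ hd hd'
    exact ih hrest'

theorem LocalRun.of_append_singleton {S : Sys P Q A} {p : P} {q r : Q}
    {w : List (Act P A)} {ℓ : Act P A} (h : LocalRun S p q (w ++ [ℓ]) r) :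
    ∃ m, LocalRun S p q w m ∧ S.delta p m ℓ r := by
  induction w generalizing q with
  | nil =>
    obtain _ | ⟨hd, ⟨⟩⟩ := h
    exact ⟨q, .nil, hd⟩
  | cons x xs ih =>
    obtain _ | ⟨hd, hrest⟩ := h
    obtain ⟨m, hm, hℓ⟩ := ih hrest
    exact ⟨m, .cons hd hm, hℓ⟩

section

variable [DecidableEq P]

theorem Steps.append_s17 {S : Sys P Q A} {c c' c'' : Config P Q A} {φ ψ : List (Act P A)}
    (h : Steps S c φ c') (h' : Steps S c' ψ c'') : Steps S c (φ ++ ψ) c'' := by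
  induction h with
  | nil => exact h'
  | cons hs _ ih => exact .cons hs (ih h')

theorem Steps.of_append_singleton {S : Sys P Q A} {c c' : Config P Q A}
    {φ : List (Act P A)} {ℓ : Act P A} (h : Steps S c (φ ++ [ℓ]) c') :
    ∃ b, Steps S c φ b ∧ Step S b ℓ c' := by
  induction φ generalizing c with
  | nil =>
    obtain _ | ⟨hs, ⟨⟩⟩ := h
    exact ⟨c, .nil, hs⟩
  | cons x xs ih =>
    obtain _ | ⟨hs, hrest⟩ := h
    obtain ⟨b, hb, hℓ⟩ := ih hrest
    exact ⟨b, .cons hs hb, hℓ⟩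

theorem Steps.buf_eq {S S' : Sys P Q A} {c c' d d' : Config P Q A} {φ : List (Act P A)}
    (h : Steps S c φ c') (h' : Steps S' d φ d') (hbuf : c.buf = d.buf) : c'.buf = d'.buf := by
  induction h generalizing d with
  | nil => cases h'; exact hbuf
  | cons hs _ ih =>
    obtain _ | ⟨hs', hrest'⟩ := h'
    refine ih hrest' ?_
    cases hs with
    | send => cases hs'; simp [hbuf]
    | recv _ he =>
      rcases hs' with _ | ⟨_, he'⟩
      rw [hbuf, he'] at he
      simp [hbuf, (List.cons.inj he).2]

def proj (i : P) (φ : List (Act P A)) : List (Act P A) :=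
  φ.filter fun ℓ => ℓ.subj = i

theorem proj_cons (i : P) (ℓ : Act P A) (φ : List (Act P A)) :
    proj i (ℓ :: φ) = if ℓ.subj = i then ℓ :: proj i φ else proj i φ := by
  simp [proj, List.filter_cons]

theorem Steps.localRun_proj {S : Sys P Q A} {c c' : Config P Q A} {φ : List (Act P A)}
    (h : Steps S c φ c') (i : P) : LocalRun S i (c.st i) (proj i φ) (c'.st i) := by
  induction h with
  | nil => exact .nil
  | cons hs _ ih =>
    rw [proj_cons]
    cases hs with
    | @send p q a q' hd =>
      by_cases hp : p = i
      · subst hp; simpa [Act.subj] using LocalRun.cons hd (by simpa using ih)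
      · simpa [Act.subj, hp, Function.update_of_ne (Ne.symm hp)] using ih
    | @recv p q a q' w hd _ =>
      by_cases hq : q = i
      · subst hq; simpa [Act.subj] using LocalRun.cons hd (by simpa using ih)
      · simpa [Act.subj, hq, Function.update_of_ne (Ne.symm hq)] using ih

/-- Executions from the stable configuration with control state `st` in which every send is
immediately received, so that every buffer holds at most one message. -/
inductive PairSteps (S : Sys P Q A) : (P → Q) → List (Act P A) → Prop
  | nil {st} : PairSteps S st []
  | cons {st p q a qp qq χ} : S.delta p (st p) (.send p q a) qp →
      S.delta q (Function.update st p qp q) (.recv p q a) qq →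
      PairSteps S (Function.update (Function.update st p qp) q qq) χ →
      PairSteps S st (.send p q a :: .recv p q a :: χ)

theorem PairSteps.steps {S : Sys P Q A} {st : P → Q} {χ : List (Act P A)}
    (h : PairSteps S st χ) : ∃ c, Steps S ⟨st, fun _ => []⟩ χ c := by
  induction h with
  | nil => exact ⟨_, .nil⟩
  | @cons st p q a qp qq χ hp hq _ ih =>
    obtain ⟨c, hc⟩ := ih
    have hbuf : Function.update (Function.update (fun _ => ([] : List A)) (p, q) [a]) (p, q) []
        = fun _ => [] := by simp
    refine ⟨c, .cons (.send hp) (.cons (.recv (w := []) hq ?_) ?_)⟩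
    · simp
    · simpa [hbuf] using hc

theorem PairSteps.bounded {S : Sys P Q A} {st : P → Q} {χ : List (Act P A)}
    (h : PairSteps S st χ) : Bounded 1 χ := by
  induction h with
  | nil => intro k p q; simp
  | cons _ _ _ ih =>
    intro k p' q'
    match k with
    | 0 => simp
    | 1 => simp only [List.take_succ_cons, List.take_zero, List.countP_cons,
        List.countP_nil]; split_ifs <;> simp_all
    | n + 2 =>
      have := ih n p' q'
      simp only [List.take_succ_cons, List.countP_cons]
      split_ifs <;> omega

theorem Match.exists_pairSteps {S : Sys P Q A} (hP : Proper S) {i : P} {st : P → Q}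
    {w : List (Act P A)} (hm : Match S i st w) {qi : Q} (hl : LocalTr S i qi w) :
    ∃ χ, PairSteps S (Function.update st i qi) χ ∧ proj i χ = w := by
  induction hm generalizing qi with
  | nil => exact ⟨[], .nil, rfl⟩
  | @alt st _ _ p q a _ hp hq hs hr _ ih =>
    obtain ⟨_, qp, -, ⟨⟩, hdp, rfl⟩ := hs
    obtain ⟨_, qq, -, ⟨⟩, hdq, rfl⟩ := hr
    dsimp only [Act.subj] at hdp hdq ih
    obtain ⟨χ, hχ, hproj⟩ := ih hl
    refine ⟨.send p q a :: .recv p q a :: χ, .cons (qp := qp) (qq := qq) ?_ ?_ ?_, ?_⟩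
    · simpa [Function.update_of_ne hp] using hdp
    · simpa [Function.update_of_ne hq, Function.update_comm hp.symm] using hdq
    · rwa [Function.update_comm hp.symm, Function.update_comm hq.symm]
    · simp [proj_cons, Act.subj, hp, hq, hproj]
  | @dual st _ ℓ _ hs _ ih =>
    obtain _ | @⟨_, qi', _, _, hd, hl⟩ := hl
    obtain ⟨m, qm, hm, hsubj, hdm, rfl⟩ := hs
    have hi := hP _ _ _ _ hd
    cases ℓ with
    | send i m a =>
      cases hi; cases hsubj
      dsimp only [Act.subj, Act.dual] at hd hdm hm hl ih ⊢
      obtain ⟨χ, hχ, hproj⟩ := ih hl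
      refine ⟨.send i m a :: .recv i m a :: χ, .cons (qp := qi') (qq := qm) ?_ ?_ ?_, ?_⟩
      · simpa using hd
      · simpa [Function.update_of_ne hm] using hdm
      · rwa [Function.update_idem, Function.update_comm hm.symm]
      · simp [proj_cons, Act.subj, hm, hproj]
    | recv m i a =>
      cases hi; cases hsubj
      dsimp only [Act.subj, Act.dual] at hd hdm hm hl ih ⊢
      obtain ⟨χ, hχ, hproj⟩ := ih hl
      refine ⟨.send m i a :: .recv m i a :: χ, .cons (qp := qm) (qq := qi') ?_ ?_ ?_, ?_⟩
      · simpa [Function.update_of_ne hm] using hdm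
      · simpa [Function.update_of_ne hm.symm] using hd
      · rwa [Function.update_comm hm.symm, Function.update_idem]
      · simp [proj_cons, Act.subj, hm, hproj]

theorem traceOf_of_traceOf_bounded {S S' : Sys P Q A} (hP : Proper S)
    (hMC : MultipartyCompatible S) (hD' : Deterministic S')
    (h : ∀ φ, Bounded 1 φ → TraceOf S φ → TraceOf S' φ) (φ : List (Act P A))
    (hφ : TraceOf S φ) : TraceOf S' φ := by
  induction φ using List.reverseRecOn with
  | nil => exact ⟨_, .nil⟩
  | append_singleton ψ ℓ ih =>
    obtain ⟨c', hc'⟩ := hφ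
    obtain ⟨c, hc, hℓ⟩ := hc'.of_append_singleton
    obtain ⟨d, hd⟩ := ih ⟨c, hc⟩
    set i := ℓ.subj
    have hproj : proj i (ψ ++ [ℓ]) = proj i ψ ++ [ℓ] := by simp [proj, i]
    have hrun := hc'.localRun_proj i
    obtain ⟨χ, hχ, hχproj⟩ := Match.exists_pairSteps hP
      (hMC _ .init (fun _ => rfl) i _ hrun.localTr) hrun.localTr
    rw [Function.update_eq_self] at hχ
    obtain ⟨e, he⟩ := h χ hχ.bounded hχ.steps
    have hrun' := he.localRun_proj i
    rw [hχproj, hproj] at hrun'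
    obtain ⟨m, hm, hdelta⟩ := hrun'.of_append_singleton
    rw [hm.unique hD' (hd.localRun_proj i)] at hdelta
    cases hℓ with
    | send => exact ⟨_, hd.append_s17 (.cons (.send hdelta) .nil)⟩
    | recv _ hbuf =>
      rw [hc.buf_eq hd rfl] at hbuf
      exact ⟨_, hd.append_s17 (.cons (.recv hdelta hbuf) .nil)⟩

end

/-- two basic, multiparty compatible systems with the same
1-bound traces have exactly the same traces. -/
theorem one_buffer_equivalence [DecidableEq P] (S1 S2 : Sys P Q A)
    (hB1 : Basic S1) (hMC1 : MultipartyCompatible S1)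
    (hB2 : Basic S2) (hMC2 : MultipartyCompatible S2)
    (h1 : ∀ φ, Bounded 1 φ → (TraceOf S1 φ ↔ TraceOf S2 φ)) :
    ∀ φ, TraceOf S1 φ ↔ TraceOf S2 φ := fun φ =>
  ⟨traceOf_of_traceOf_bounded hB1.1 hMC1 hB2.2.1 (fun ψ hψ => (h1 ψ hψ).mp) φ,
    traceOf_of_traceOf_bounded hB2.1 hMC2 hB1.2.1 (fun ψ hψ => (h1 ψ hψ).mpr) φ⟩
end
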